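/- arXiv:2210.10837 — 7 statements merged into one kernel-verified Lean document; each statement's English description precedes it below -/
import Mathlib

section
/- For every measurable predictor f : 𝒳 → [0,1], the group sufficiency gap satisfies Suf_f ≤ 4·E[|f(X) − B|], where B = E[Y | σ(X,A)] is the A-group Bayes predictor. (Theorem 1, first part.) -/
open MeasureTheory

/-!
Write `g = f ∘ X`. Both `σ(f X)` and `σ(f X, A)` are coarser than `σ(X, A)`, so by the tower
property `E[Y | m] - g = E[B - g | m]` for either of them, since `g` is `m`-measurable. The gap
is therefore the `L¹` distance between two conditional expectations of `B - g`, and each has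
`L¹` norm at most `E|B - g|`. This gives even `Suf_f ≤ 2 E|f(X) - B|`.
-/

namespace MeasureTheory

variable {Ω : Type*} {m₀ : MeasurableSpace Ω} {μ : Measure Ω}

theorem integral_abs_condExp_sub_condExp_le (m₁ m₂ : MeasurableSpace Ω) (h : Ω → ℝ) :
    ∫ ω, |μ[h | m₁] ω - μ[h | m₂] ω| ∂μ ≤ 2 * ∫ ω, |h ω| ∂μ := by
  have hi₁ : Integrable (fun ω ↦ |μ[h | m₁] ω|) μ := integrable_condExp.abs
  have hi₂ : Integrable (fun ω ↦ |μ[h | m₂] ω|) μ := integrable_condExp.abs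
  calc ∫ ω, |μ[h | m₁] ω - μ[h | m₂] ω| ∂μ
      ≤ ∫ ω, (|μ[h | m₁] ω| + |μ[h | m₂] ω|) ∂μ :=
        integral_mono (integrable_condExp.sub integrable_condExp).abs (hi₁.add hi₂)
          fun ω ↦ abs_sub _ _
    _ = ∫ ω, |μ[h | m₁] ω| ∂μ + ∫ ω, |μ[h | m₂] ω| ∂μ := integral_add hi₁ hi₂
    _ ≤ ∫ ω, |h ω| ∂μ + ∫ ω, |h ω| ∂μ :=
        add_le_add (integral_abs_condExp_le h) (integral_abs_condExp_le h)
    _ = 2 * ∫ ω, |h ω| ∂μ := (two_mul _).symm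

variable [IsFiniteMeasure μ]

theorem condExp_sub_eventuallyEq_condExp_condExp_sub {m m' : MeasurableSpace Ω} (hm : m ≤ m')
    (hm' : m' ≤ m₀) {Y g : Ω → ℝ} (hg : Integrable g μ) (hgm : StronglyMeasurable[m] g) :
    μ[Y | m] - g =ᵐ[μ] μ[μ[Y | m'] - g | m] := by
  have htower : μ[μ[Y | m'] | m] =ᵐ[μ] μ[Y | m] := condExp_condExp_of_le hm hm'
  have hg_self : μ[g | m] = g := condExp_of_stronglyMeasurable (hm.trans hm') hgm hg
  filter_upwards [condExp_sub (m := m) integrable_condExp hg, htower] with ω hsub htower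
  simp only [Pi.sub_apply] at hsub ⊢
  rw [hsub, htower, hg_self]

theorem integral_abs_condExp_sub_condExp_le_two_mul {m₁ m₂ m : MeasurableSpace Ω}
    (h₁ : m₁ ≤ m) (h₂ : m₂ ≤ m) (hm : m ≤ m₀) {Y g : Ω → ℝ} (hg : Integrable g μ)
    (hg₁ : StronglyMeasurable[m₁] g) (hg₂ : StronglyMeasurable[m₂] g) :
    ∫ ω, |μ[Y | m₁] ω - μ[Y | m₂] ω| ∂μ ≤ 2 * ∫ ω, |g ω - μ[Y | m] ω| ∂μ := by
  have hgap : (fun ω ↦ |μ[Y | m₁] ω - μ[Y | m₂] ω|) =ᵐ[μ]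
      fun ω ↦ |μ[μ[Y | m] - g | m₁] ω - μ[μ[Y | m] - g | m₂] ω| := by
    filter_upwards [condExp_sub_eventuallyEq_condExp_condExp_sub h₁ hm hg hg₁,
      condExp_sub_eventuallyEq_condExp_condExp_sub h₂ hm hg hg₂] with ω e₁ e₂
    simp only [Pi.sub_apply] at e₁ e₂
    rw [← e₁, ← e₂, sub_sub_sub_cancel_right]
  rw [integral_congr_ae hgap]
  simpa only [Pi.sub_apply, abs_sub_comm] using
    integral_abs_condExp_sub_condExp_le m₁ m₂ (μ[Y | m] - g)

end MeasureTheory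

theorem suf_gap_le_four_mul_expected_dist_to_bayes_general
    {Ω 𝒳 𝒜 : Type*} [MeasurableSpace Ω] [MeasurableSpace 𝒳] [MeasurableSpace 𝒜]
    (P : Measure Ω) [IsProbabilityMeasure P]
    (X : Ω → 𝒳) (A : Ω → 𝒜) (Y : Ω → ℝ)
    (hX : Measurable X) (hA : Measurable A)
    (f : 𝒳 → ℝ) (hf : Measurable f) (hf01 : ∀ x, f x ∈ Set.Icc (0 : ℝ) 1)
    (B : Ω → ℝ)
    (hB : B = P[Y | MeasurableSpace.comap X inferInstance ⊔ MeasurableSpace.comap A inferInstance]) :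
    ∫ ω, |(P[Y | MeasurableSpace.comap (f ∘ X) inferInstance]) ω -
        (P[Y | MeasurableSpace.comap (f ∘ X) inferInstance ⊔
              MeasurableSpace.comap A inferInstance]) ω| ∂P
      ≤ 4 * ∫ ω, |f (X ω) - B ω| ∂P := by
  have hfX_le_X : MeasurableSpace.comap (f ∘ X) inferInstance
      ≤ MeasurableSpace.comap X inferInstance := by
    rw [← MeasurableSpace.comap_comp]
    exact MeasurableSpace.comap_mono hf.comap_le
  have hfX_meas : StronglyMeasurable[MeasurableSpace.comap (f ∘ X) inferInstance] (f ∘ X) :=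
    (comap_measurable (f ∘ X)).stronglyMeasurable
  have hfX_int : Integrable (f ∘ X) P :=
    .of_bound (hf.comp hX).aestronglyMeasurable 1 <| ae_of_all _ fun ω ↦
      abs_le.2 ⟨neg_one_lt_zero.le.trans (hf01 (X ω)).1, (hf01 (X ω)).2⟩
  have hgap := integral_abs_condExp_sub_condExp_le_two_mul (le_sup_of_le_left hfX_le_X)
    (sup_le_sup_right hfX_le_X _) (sup_le hX.comap_le hA.comap_le) hfX_int hfX_meas
    (hfX_meas.mono le_sup_left) (Y := Y)
  rw [← hB] at hgap
  have hdist_nonneg : 0 ≤ ∫ ω, |f (X ω) - B ω| ∂P := integral_nonneg fun ω ↦ abs_nonneg _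
  exact hgap.trans (mul_le_mul_of_nonneg_right (by norm_num) hdist_nonneg)

/-- **Theorem 1 (first part).** For every measurable predictor `f : 𝒳 → [0,1]`, the group
sufficiency gap satisfies `Suf_f ≤ 4 · E[|f(X) − B|]`, where `B = E[Y | σ(X,A)]` is the
`A`-group Bayes predictor. -/
theorem suf_gap_le_four_mul_expected_dist_to_bayes
    {Ω 𝒳 𝒜 : Type*} [MeasurableSpace Ω] [MeasurableSpace 𝒳] [MeasurableSpace 𝒜]
    (P : Measure Ω) [IsProbabilityMeasure P]
    (X : Ω → 𝒳) (A : Ω → 𝒜) (Y : Ω → ℝ)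
    (hX : Measurable X) (hA : Measurable A) (hY : Measurable Y)
    (hY01 : ∀ ω, Y ω = 0 ∨ Y ω = 1)
    (f : 𝒳 → ℝ) (hf : Measurable f) (hf01 : ∀ x, f x ∈ Set.Icc (0 : ℝ) 1)
    (B : Ω → ℝ)
    (hB : B = P[Y | MeasurableSpace.comap X inferInstance ⊔ MeasurableSpace.comap A inferInstance]) :
    ∫ ω, |(P[Y | MeasurableSpace.comap (f ∘ X) inferInstance]) ω -
        (P[Y | MeasurableSpace.comap (f ∘ X) inferInstance ⊔
              MeasurableSpace.comap A inferInstance]) ω| ∂P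
      ≤ 4 * ∫ ω, |f (X ω) - B ω| ∂P :=
  suf_gap_le_four_mul_expected_dist_to_bayes_general P X A Y hX hA f hf hf01 B hB
end

section
/- Suppose in addition that 𝒜 is a finite set with |𝒜| = n, every singleton of 𝒜 is measurable, and A is uniformly distributed, i.e. P(A = a) = 1/n for every a ∈ 𝒜. Then for every measurable predictor f : 𝒳 → [0,1], Suf_f ≤ (4/n)·Σ_{a∈𝒜} E[|f(X) − B| | A = a], where E[· | A = a] denotes expectation under the conditional probability measure P(· | A = a). (Theorem 1, second part.) -/
/-!
Put `φ = f ∘ X`, which is measurable both for `σ(f(X))` and for `σ(f(X), A)`. By the tower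
property the two conditional expectations of `Y` are conditional expectations of `B`, and
conditioning on a σ-algebra for which `φ` is measurable does not increase the `L¹` distance to `φ`.
So each of them is within `E|B - φ|` of `φ`, and `Suf_f ≤ 2 E|f(X) - B|`. When `A` is uniform,
`E|f(X) - B|` is the average over `a` of the conditional expectations given `A = a`.
-/

open MeasureTheory ProbabilityTheory

namespace MeasureTheory

variable {Ω : Type*} {m m₁ m₂ m0 : MeasurableSpace Ω} {μ : Measure Ω} [IsFiniteMeasure μ]

lemma integral_abs_condExp_sub_le {g φ : Ω → ℝ} (hm : m ≤ m0) (hg : Integrable g μ)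
    (hφm : StronglyMeasurable[m] φ) (hφ : Integrable φ μ) :
    ∫ ω, |μ[g | m] ω - φ ω| ∂μ ≤ ∫ ω, |g ω - φ ω| ∂μ := by
  have hsub : μ[g - φ | m] =ᵐ[μ] μ[g | m] - φ := by
    simpa only [condExp_of_stronglyMeasurable hm hφm hφ] using condExp_sub hg hφ m
  calc ∫ ω, |μ[g | m] ω - φ ω| ∂μ = ∫ ω, |μ[g - φ | m] ω| ∂μ :=
        integral_congr_ae (hsub.mono fun ω h => by simp [h])
    _ ≤ ∫ ω, |g ω - φ ω| ∂μ := integral_abs_condExp_le _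

lemma integral_abs_condExp_sub_condExp_le_s1 {Y φ : Ω → ℝ} (h₁ : m₁ ≤ m) (h₂ : m₂ ≤ m) (hm : m ≤ m0)
    (hφ₁ : StronglyMeasurable[m₁] φ) (hφ₂ : StronglyMeasurable[m₂] φ) (hφ : Integrable φ μ) :
    ∫ ω, |μ[Y | m₁] ω - μ[Y | m₂] ω| ∂μ ≤ 2 * ∫ ω, |μ[Y | m] ω - φ ω| ∂μ := by
  have tower₁ := condExp_condExp_of_le (f := Y) (μ := μ) h₁ hm
  have tower₂ := condExp_condExp_of_le (f := Y) (μ := μ) h₂ hm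
  have hdist : ∀ {m' : MeasurableSpace Ω}, m' ≤ m → StronglyMeasurable[m'] φ →
      ∫ ω, |μ[μ[Y | m] | m'] ω - φ ω| ∂μ ≤ ∫ ω, |μ[Y | m] ω - φ ω| ∂μ :=
    fun h hφm => integral_abs_condExp_sub_le (h.trans hm) integrable_condExp hφm hφ
  have htri : ∀ᵐ ω ∂μ, |μ[Y | m₁] ω - μ[Y | m₂] ω|
      ≤ |μ[μ[Y | m] | m₁] ω - φ ω| + |μ[μ[Y | m] | m₂] ω - φ ω| := by
    filter_upwards [tower₁, tower₂] with ω e₁ e₂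
    rw [e₁, e₂]
    exact (abs_sub_le _ (φ ω) _).trans_eq (by rw [abs_sub_comm (φ ω)])
  have hint : ∀ m' : MeasurableSpace Ω,
      Integrable (fun ω => |μ[μ[Y | m] | m'] ω - φ ω|) μ := fun _ =>
    (integrable_condExp.sub hφ).abs
  calc ∫ ω, |μ[Y | m₁] ω - μ[Y | m₂] ω| ∂μ
      ≤ ∫ ω, |μ[μ[Y | m] | m₁] ω - φ ω| + |μ[μ[Y | m] | m₂] ω - φ ω| ∂μ :=
        integral_mono_ae (integrable_condExp.sub integrable_condExp).abs
          ((hint m₁).add (hint m₂)) htri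
    _ ≤ 2 * ∫ ω, |μ[Y | m] ω - φ ω| ∂μ := by
        rw [integral_add (hint m₁) (hint m₂)]
        linarith [hdist h₁ hφ₁, hdist h₂ hφ₂]

end MeasureTheory

namespace ProbabilityTheory

variable {Ω α : Type*} [MeasurableSpace Ω] [Fintype α] [MeasurableSpace α]
  [DiscreteMeasurableSpace α] {X : Ω → α} {μ : Measure Ω} [IsFiniteMeasure μ]

lemma integral_eq_sum_measureReal_mul_integral_cond (hX : Measurable X) {g : Ω → ℝ}
    (hg : Integrable g μ) :
    ∫ ω, g ω ∂μ = ∑ x, μ.real (X ⁻¹' {x}) * ∫ ω, g ω ∂μ[|X ← x] := by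
  have hle : ∀ x, μ (X ⁻¹' {x}) • μ[|X ← x] ≤ μ := fun x => by
    conv_rhs => rw [← sum_meas_smul_cond_fiber hX μ]
    exact Finset.single_le_sum (f := fun x => μ (X ⁻¹' {x}) • μ[|X ← x])
      (fun _ _ => Measure.zero_le _) (Finset.mem_univ x)
  conv_lhs => rw [← sum_meas_smul_cond_fiber hX μ]
  rw [integral_finsetSum_measure fun x _ => hg.mono_measure (hle x)]
  simp [integral_smul_measure, measureReal_def]

lemma integral_eq_one_div_mul_sum_integral_cond_of_uniform (hX : Measurable X) {n : ℕ}
    (hunif : ∀ x, μ (X ⁻¹' {x}) = 1 / n) {g : Ω → ℝ} (hg : Integrable g μ) :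
    ∫ ω, g ω ∂μ = (1 / n) * ∑ x, ∫ ω, g ω ∂μ[|X ← x] := by
  simp [integral_eq_sum_measureReal_mul_integral_cond hX hg, measureReal_def, hunif,
    Finset.mul_sum]

end ProbabilityTheory

theorem suf_gap_le_four_div_card_mul_sum_cond_expected_dist_to_bayes_general
    {Ω 𝒳 𝒜 : Type*} [MeasurableSpace Ω] [MeasurableSpace 𝒳] [MeasurableSpace 𝒜]
    [Fintype 𝒜] [MeasurableSingletonClass 𝒜]
    (P : Measure Ω) [IsProbabilityMeasure P]
    (X : Ω → 𝒳) (A : Ω → 𝒜) (Y : Ω → ℝ)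
    (hX : Measurable X) (hA : Measurable A)
    (n : ℕ)
    (hunif : ∀ a : 𝒜, P (A ⁻¹' {a}) = 1 / n)
    (f : 𝒳 → ℝ) (hf : Measurable f) (hf01 : ∀ x, f x ∈ Set.Icc (0 : ℝ) 1)
    (B : Ω → ℝ)
    (hB : B = P[Y | MeasurableSpace.comap X inferInstance ⊔ MeasurableSpace.comap A inferInstance]) :
    ∫ ω, |(P[Y | MeasurableSpace.comap (f ∘ X) inferInstance]) ω -
        (P[Y | MeasurableSpace.comap (f ∘ X) inferInstance ⊔
              MeasurableSpace.comap A inferInstance]) ω| ∂P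
      ≤ (4 / n) * ∑ a : 𝒜, ∫ ω, |f (X ω) - B ω| ∂(P[|A ⁻¹' {a}]) := by
  have hfX_le_X : MeasurableSpace.comap (f ∘ X) inferInstance
      ≤ MeasurableSpace.comap X inferInstance := by
    rw [← MeasurableSpace.comap_comp]
    exact MeasurableSpace.comap_mono hf.comap_le
  have hfX : StronglyMeasurable[MeasurableSpace.comap (f ∘ X) inferInstance]
      (fun ω => f (X ω)) :=
    (comap_measurable (f ∘ X)).stronglyMeasurable
  have hfX_int : Integrable (fun ω => f (X ω)) P :=
    .of_bound (hf.comp hX).aestronglyMeasurable 1 (.of_forall fun ω => by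
      simpa [abs_le] using ⟨(hf01 (X ω)).1.trans' (by norm_num), (hf01 (X ω)).2⟩)
  have hgap := integral_abs_condExp_sub_condExp_le_s1 (μ := P) (Y := Y)
    (hfX_le_X.trans le_sup_left) (sup_le (hfX_le_X.trans le_sup_left) le_sup_right)
    (sup_le hX.comap_le hA.comap_le) hfX (hfX.mono le_sup_left) hfX_int
  have hdist_int : Integrable (fun ω => |f (X ω) - B ω|) P :=
    (hfX_int.sub (hB ▸ integrable_condExp)).abs
  calc _ ≤ 2 * ∫ ω, |f (X ω) - B ω| ∂P := by
        simpa only [← hB, abs_sub_comm (B _)] using hgap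
    _ ≤ 4 * ∫ ω, |f (X ω) - B ω| ∂P := by
        gcongr; norm_num
    _ = _ := by
        rw [integral_eq_one_div_mul_sum_integral_cond_of_uniform hA hunif hdist_int]
        ring

/-- **Theorem 1 (second part).** If `𝒜` is finite with `|𝒜| = n`, singletons measurable, and
`A` is uniformly distributed (`P(A = a) = 1/n`), then for every measurable predictor
`f : 𝒳 → [0,1]`, `Suf_f ≤ (4/n) · Σ_{a ∈ 𝒜} E[|f(X) − B| | A = a]`. -/
theorem suf_gap_le_four_div_card_mul_sum_cond_expected_dist_to_bayes
    {Ω 𝒳 𝒜 : Type*} [MeasurableSpace Ω] [MeasurableSpace 𝒳] [MeasurableSpace 𝒜]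
    [Fintype 𝒜] [MeasurableSingletonClass 𝒜]
    (P : Measure Ω) [IsProbabilityMeasure P]
    (X : Ω → 𝒳) (A : Ω → 𝒜) (Y : Ω → ℝ)
    (hX : Measurable X) (hA : Measurable A) (hY : Measurable Y)
    (hY01 : ∀ ω, Y ω = 0 ∨ Y ω = 1)
    (n : ℕ) (hn : 1 ≤ n) (hcard : Fintype.card 𝒜 = n)
    (hunif : ∀ a : 𝒜, P (A ⁻¹' {a}) = 1 / n)
    (f : 𝒳 → ℝ) (hf : Measurable f) (hf01 : ∀ x, f x ∈ Set.Icc (0 : ℝ) 1)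
    (B : Ω → ℝ)
    (hB : B = P[Y | MeasurableSpace.comap X inferInstance ⊔ MeasurableSpace.comap A inferInstance]) :
    ∫ ω, |(P[Y | MeasurableSpace.comap (f ∘ X) inferInstance]) ω -
        (P[Y | MeasurableSpace.comap (f ∘ X) inferInstance ⊔
              MeasurableSpace.comap A inferInstance]) ω| ∂P
      ≤ (4 / n) * ∑ a : 𝒜, ∫ ω, |f (X ω) - B ω| ∂(P[|A ⁻¹' {a}]) :=
  suf_gap_le_four_div_card_mul_sum_cond_expected_dist_to_bayes_general P X A Y hX hA n hunif f hf
    hf01 B hB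
end

section
/- Let Θ be a measurable space (a space of predictor parameters), g : Θ × 𝒳 → [0,1] jointly measurable, and suppose 𝒜 is finite with |𝒜| = n, singletons measurable, and P(A = a) = 1/n for all a ∈ 𝒜. Let Q be a probability measure on Θ and define the randomized predictor f : 𝒳 → [0,1] by f(x) := ∫_Θ g(θ, x) dQ(θ). For each a ∈ 𝒜, let Q*_a and μ_a be probability measures on Θ, and assume that μ_a represents the subgroup conditional distribution in the sense that P-almost surely on the event {A = a}, ∫_Θ g(θ, X(ω)) dμ_a(θ) = B(ω), where B = E[Y | σ(X,A)]. Then the group sufficiency gap of f satisfies Suf_f ≤ (2√2 / n)·Σ_{a∈𝒜} ( √(KL(Q*_a ‖ Q)) + √(KL(Q*_a ‖ μ_a)) ), where KL denotes Kullback–Leibler divergence (equal to +∞ in case of non-absolute-continuity, in which case the bound is trivial). (Corollary 1.) -/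
open MeasureTheory ProbabilityTheory
open scoped ENNReal NNReal Classical

/-- The Kullback–Leibler divergence between two measures, with value `∞` when the first is not
absolutely continuous with respect to the second (or the log-likelihood ratio is not
integrable). -/

noncomputable def klDiv {Θ : Type*} [MeasurableSpace Θ] (μ ν : MeasureTheory.Measure Θ) : ℝ≥0∞ :=
  if μ ≪ ν ∧ MeasureTheory.Integrable (MeasureTheory.llr μ ν) μ then
    ENNReal.ofReal (∫ θ, MeasureTheory.llr μ ν θ ∂μ) else ∞

/-!
Both conditional expectations `E[Y | f(X)]` and `E[Y | f(X), A]` are L¹-contractions towards the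
`σ(f(X))`-measurable variable `f(X)` once one towers through `σ(X, A)`, so the sufficiency gap is
at most `2 E|B - f(X)|`. On `{A = a}`, `B` and `f(X)` integrate the same `[0,1]`-valued function
`g(·, X)` against `μ_a` and `Q`; passing through `Q*_a`, each of the two differences is at most
`√(2 KL)` by the Pinsker-type estimate `∫ |dμ/dν - 1| dν ≤ 2 √(2 KL(μ ‖ ν))`, which is
Cauchy–Schwarz applied to `(x - 1)² ≤ 2 (x + 3) (x log x - x + 1)`. Averaging over the `n`
equally likely groups gives the bound.
-/

lemma klDiv_eq_informationTheory_klDiv {Θ : Type*} [MeasurableSpace Θ] (μ ν : Measure Θ)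
    [IsProbabilityMeasure μ] [IsProbabilityMeasure ν] :
    klDiv μ ν = InformationTheory.klDiv μ ν := by
  rw [klDiv, InformationTheory.klDiv_def]
  simp

namespace InformationTheory

lemma sq_sub_one_le_mul_klFun {x : ℝ} (hx : 0 ≤ x) : (x - 1) ^ 2 ≤ 2 * (x + 3) * klFun x := by
  obtain ⟨s, hs, rfl⟩ : ∃ s, 0 ≤ s ∧ s ^ 2 = x := ⟨√x, Real.sqrt_nonneg x, Real.sq_sqrt hx⟩
  have hkl : (s - 1) ^ 2 ≤ klFun (s ^ 2) := by
    rw [klFun_apply, Real.log_pow]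
    push_cast
    nlinarith [mul_le_mul_of_nonneg_left (Real.self_sub_one_le_mul_log hs) hs]
  calc (s ^ 2 - 1) ^ 2 = (s + 1) ^ 2 * (s - 1) ^ 2 := by ring
    _ ≤ 2 * (s ^ 2 + 3) * (s - 1) ^ 2 := by gcongr; nlinarith [sq_nonneg (s - 1)]
    _ ≤ 2 * (s ^ 2 + 3) * klFun (s ^ 2) := by gcongr

variable {α : Type*} [MeasurableSpace α] {μ ν : Measure α}
  [IsProbabilityMeasure μ] [IsProbabilityMeasure ν]

lemma lintegral_ofReal_two_mul_rnDeriv_add_three_le :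
    ∫⁻ x, ENNReal.ofReal (2 * ((μ.rnDeriv ν x).toReal + 3)) ∂ν ≤ 8 := calc
  ∫⁻ x, ENNReal.ofReal (2 * ((μ.rnDeriv ν x).toReal + 3)) ∂ν
      ≤ ∫⁻ x, 2 * (μ.rnDeriv ν x + 3) ∂ν := by
    refine lintegral_mono fun x => ?_
    rw [ENNReal.ofReal_mul zero_le_two, ENNReal.ofReal_add ENNReal.toReal_nonneg (by norm_num)]
    gcongr
    · simp
    · exact ENNReal.ofReal_toReal_le
    · simp
  _ = 2 * (∫⁻ x, μ.rnDeriv ν x ∂ν + 3) := by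
    rw [lintegral_const_mul' _ _ (by simp), lintegral_add_right _ measurable_const]
    simp
  _ ≤ 2 * (1 + 3) := by
    gcongr
    simpa using Measure.lintegral_rnDeriv_le (μ := μ) (ν := ν)
  _ = 8 := by norm_num

lemma lintegral_ofReal_abs_rnDeriv_sub_one_le (hμν : μ ≪ ν) :
    ∫⁻ x, ENNReal.ofReal |(μ.rnDeriv ν x).toReal - 1| ∂ν
      ≤ klDiv μ ν ^ (1 / 2 : ℝ) * (2 * ENNReal.ofReal √2) := by
  set ρ := fun x => (μ.rnDeriv ν x).toReal
  set F : α → ℝ≥0∞ := fun x => ENNReal.ofReal (klFun (ρ x)) ^ (1 / 2 : ℝ)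
  set G : α → ℝ≥0∞ := fun x => ENNReal.ofReal (2 * (ρ x + 3)) ^ (1 / 2 : ℝ)
  have hρ : ∀ x, 0 ≤ ρ x := fun x => ENNReal.toReal_nonneg
  have hFG : ∀ x, ENNReal.ofReal |ρ x - 1| ≤ F x * G x := by
    intro x
    rw [← ENNReal.mul_rpow_of_nonneg _ _ (by norm_num),
      ← ENNReal.ofReal_mul (klFun_nonneg (hρ x)),
      ENNReal.ofReal_rpow_of_nonneg (by have := klFun_nonneg (hρ x); positivity) (by norm_num),
      ← Real.sqrt_eq_rpow, ← Real.sqrt_sq_eq_abs]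
    refine ENNReal.ofReal_le_ofReal (Real.sqrt_le_sqrt ?_)
    linarith [sq_sub_one_le_mul_klFun (hρ x)]
  have hF : ∫⁻ x, F x ^ (2 : ℝ) ∂ν = klDiv μ ν := by
    simp_rw [F, ← ENNReal.rpow_mul, one_div_mul_cancel (two_ne_zero : (2 : ℝ) ≠ 0),
      ENNReal.rpow_one]
    exact (klDiv_eq_lintegral_klFun_of_ac hμν).symm
  have hG : ∫⁻ x, G x ^ (2 : ℝ) ∂ν ≤ 8 := by
    simp_rw [G, ← ENNReal.rpow_mul, one_div_mul_cancel (two_ne_zero : (2 : ℝ) ≠ 0),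
      ENNReal.rpow_one]
    exact lintegral_ofReal_two_mul_rnDeriv_add_three_le
  calc ∫⁻ x, ENNReal.ofReal |ρ x - 1| ∂ν ≤ ∫⁻ x, F x * G x ∂ν := lintegral_mono hFG
    _ ≤ (∫⁻ x, F x ^ (2 : ℝ) ∂ν) ^ (1 / 2 : ℝ) * (∫⁻ x, G x ^ (2 : ℝ) ∂ν) ^ (1 / 2 : ℝ) :=
      ENNReal.lintegral_mul_le_Lp_mul_Lq ν .two_two (by fun_prop) (by fun_prop)
    _ ≤ klDiv μ ν ^ (1 / 2 : ℝ) * (2 * ENNReal.ofReal √2) := by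
      rw [hF]
      gcongr
      calc _ ≤ (8 : ℝ≥0∞) ^ (1 / 2 : ℝ) := by gcongr
        _ = ((2 * ENNReal.ofReal √2) ^ (2 : ℝ)) ^ (1 / 2 : ℝ) := by
          rw [ENNReal.rpow_two, mul_pow, ← ENNReal.ofReal_pow (by positivity),
            Real.sq_sqrt zero_le_two]
          norm_num
        _ = _ := by rw [← ENNReal.rpow_mul]; norm_num

lemma abs_integral_sub_integral_le_half_integral_abs_rnDeriv_sub_one (hμν : μ ≪ ν)
    {h : α → ℝ} (hh : Measurable h) (h01 : ∀ x, h x ∈ Set.Icc 0 1) :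
    |∫ x, h x ∂μ - ∫ x, h x ∂ν| ≤ 1 / 2 * ∫ x, |(μ.rnDeriv ν x).toReal - 1| ∂ν := by
  set ρ := fun x => (μ.rnDeriv ν x).toReal
  set k := fun x => h x - 1 / 2
  have hk : ∀ x, ‖k x‖ ≤ 1 / 2 := fun x => by
    rw [Real.norm_eq_abs, abs_le, sub_le_iff_le_add, le_sub_iff_add_le]
    constructor <;> linarith [(h01 x).1, (h01 x).2]
  have hkm : Measurable k := hh.sub measurable_const
  have hhμ : Integrable h μ := .of_mem_Icc 0 1 hh.aemeasurable (ae_of_all _ h01)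
  have hhν : Integrable h ν := .of_mem_Icc 0 1 hh.aemeasurable (ae_of_all _ h01)
  have hkμ : Integrable k μ := hhμ.sub (integrable_const _)
  have hkν : Integrable k ν := hhν.sub (integrable_const _)
  have hρ : Integrable (fun x => ρ x - 1) ν :=
    Measure.integrable_toReal_rnDeriv.sub (integrable_const 1)
  -- centring `h` at `1/2` halves its sup norm without changing the difference of integrals
  have hdiff : ∫ x, h x ∂μ - ∫ x, h x ∂ν = ∫ x, k x * (ρ x - 1) ∂ν := by
    have hρk : Integrable (fun x => ρ x * k x) ν := by
      simpa only [smul_eq_mul] using (integrable_rnDeriv_smul_iff hμν).2 hkμ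
    simp_rw [mul_sub, mul_one, mul_comm (k _)]
    rw [integral_sub hρk hkν]
    simp only [ρ, ← smul_eq_mul, integral_rnDeriv_smul hμν]
    rw [integral_sub hhμ (integrable_const _), integral_sub hhν (integrable_const _)]
    simp
  calc |∫ x, h x ∂μ - ∫ x, h x ∂ν| = |∫ x, k x * (ρ x - 1) ∂ν| := by rw [hdiff]
    _ ≤ ∫ x, |k x * (ρ x - 1)| ∂ν := abs_integral_le_integral_abs
    _ ≤ ∫ x, 1 / 2 * |ρ x - 1| ∂ν := by
      refine integral_mono (hρ.bdd_mul hkm.aestronglyMeasurable (ae_of_all _ hk)).abs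
        (hρ.abs.const_mul _) fun x => ?_
      rw [abs_mul]
      exact mul_le_mul_of_nonneg_right (hk x) (abs_nonneg _)
    _ = 1 / 2 * ∫ x, |ρ x - 1| ∂ν := integral_const_mul _ _

lemma edist_integral_integral_le_klDiv {h : α → ℝ} (hh : Measurable h)
    (h01 : ∀ x, h x ∈ Set.Icc 0 1) :
    edist (∫ x, h x ∂μ) (∫ x, h x ∂ν) ≤ ENNReal.ofReal √2 * klDiv μ ν ^ (1 / 2 : ℝ) := by
  by_cases hμν : μ ≪ ν
  swap
  · simp [klDiv_of_not_ac hμν]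
  have hρ : Integrable (fun x => |(μ.rnDeriv ν x).toReal - 1|) ν :=
    (Measure.integrable_toReal_rnDeriv.sub (integrable_const 1)).abs
  calc edist (∫ x, h x ∂μ) (∫ x, h x ∂ν)
      = ENNReal.ofReal |∫ x, h x ∂μ - ∫ x, h x ∂ν| := by rw [edist_dist, Real.dist_eq]
    _ ≤ ENNReal.ofReal (1 / 2 * ∫ x, |(μ.rnDeriv ν x).toReal - 1| ∂ν) :=
      ENNReal.ofReal_le_ofReal <|
        abs_integral_sub_integral_le_half_integral_abs_rnDeriv_sub_one hμν hh h01
    _ = 2⁻¹ * ∫⁻ x, ENNReal.ofReal |(μ.rnDeriv ν x).toReal - 1| ∂ν := by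
      rw [ENNReal.ofReal_mul (by norm_num),
        ofReal_integral_eq_lintegral_ofReal hρ (ae_of_all _ fun _ => abs_nonneg _), one_div,
        ENNReal.ofReal_inv_of_pos two_pos, ENNReal.ofReal_ofNat]
    _ ≤ 2⁻¹ * (klDiv μ ν ^ (1 / 2 : ℝ) * (2 * ENNReal.ofReal √2)) := by
      gcongr
      exact lintegral_ofReal_abs_rnDeriv_sub_one_le hμν
    _ = ENNReal.ofReal √2 * klDiv μ ν ^ (1 / 2 : ℝ) := by
      rw [mul_left_comm, ← mul_assoc (2⁻¹ : ℝ≥0∞),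
        ENNReal.inv_mul_cancel two_ne_zero ENNReal.ofNat_ne_top, one_mul, mul_comm]

end InformationTheory

lemma edist_integral_integral_le_klDiv_add_klDiv {Θ : Type*} [MeasurableSpace Θ]
    {Q Q' μ : Measure Θ} [IsProbabilityMeasure Q] [IsProbabilityMeasure Q']
    [IsProbabilityMeasure μ] {h : Θ → ℝ} (hh : Measurable h) (h01 : ∀ θ, h θ ∈ Set.Icc 0 1) :
    edist (∫ θ, h θ ∂μ) (∫ θ, h θ ∂Q)
      ≤ ENNReal.ofReal √2 * (klDiv Q' Q ^ (1 / 2 : ℝ) + klDiv Q' μ ^ (1 / 2 : ℝ)) := by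
  rw [klDiv_eq_informationTheory_klDiv, klDiv_eq_informationTheory_klDiv, mul_add, add_comm]
  calc edist (∫ θ, h θ ∂μ) (∫ θ, h θ ∂Q)
      ≤ edist (∫ θ, h θ ∂μ) (∫ θ, h θ ∂Q') + edist (∫ θ, h θ ∂Q') (∫ θ, h θ ∂Q) :=
        edist_triangle _ _ _
    _ ≤ _ := by
      rw [edist_comm]
      gcongr <;> exact InformationTheory.edist_integral_integral_le_klDiv hh h01

lemma integral_mem_Icc_zero_one {α : Type*} [MeasurableSpace α] {μ : Measure α}
    [IsProbabilityMeasure μ] {h : α → ℝ} (h01 : ∀ x, h x ∈ Set.Icc 0 1) :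
    ∫ x, h x ∂μ ∈ Set.Icc 0 1 :=
  ⟨integral_nonneg fun x => (h01 x).1, by
    simpa using integral_mono_of_nonneg (ae_of_all μ fun x => (h01 x).1) (integrable_const 1)
      (ae_of_all μ fun x => (h01 x).2)⟩

section CondExp

variable {Ω : Type*} {mΩ : MeasurableSpace Ω} {P : Measure Ω} [IsFiniteMeasure P]
  {m m₁ m₂ M : MeasurableSpace Ω} {Y F : Ω → ℝ}

lemma integral_abs_condExp_sub_le_of_le (hmM : m ≤ M) (hM : M ≤ mΩ) (hF : Integrable F P)
    (hFm : StronglyMeasurable[m] F) :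
    ∫ ω, |P[Y|m] ω - F ω| ∂P ≤ ∫ ω, |P[Y|M] ω - F ω| ∂P := by
  have h : P[Y|m] - F =ᵐ[P] P[P[Y|M] - F|m] := by
    filter_upwards [condExp_condExp_of_le (f := Y) hmM hM,
      condExp_sub (m := m) integrable_condExp hF] with ω h₁ h₂
    rw [h₂, Pi.sub_apply, Pi.sub_apply, h₁, condExp_of_stronglyMeasurable (hmM.trans hM) hFm hF]
  calc ∫ ω, |P[Y|m] ω - F ω| ∂P = ∫ ω, |P[P[Y|M] - F|m] ω| ∂P :=
        integral_congr_ae (h.fun_comp abs)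
    _ ≤ ∫ ω, |P[Y|M] ω - F ω| ∂P := integral_abs_condExp_le _

lemma integral_abs_condExp_sub_condExp_le (h₁₂ : m₁ ≤ m₂) (h₂M : m₂ ≤ M) (hM : M ≤ mΩ)
    (hF : Integrable F P) (hFm : StronglyMeasurable[m₁] F) :
    ∫ ω, |P[Y|m₁] ω - P[Y|m₂] ω| ∂P ≤ 2 * ∫ ω, |P[Y|M] ω - F ω| ∂P := by
  have hint : ∀ m' : MeasurableSpace Ω, Integrable (fun ω => |P[Y|m'] ω - F ω|) P :=
    fun _ => (integrable_condExp.sub hF).abs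
  calc ∫ ω, |P[Y|m₁] ω - P[Y|m₂] ω| ∂P
      ≤ ∫ ω, (|P[Y|m₁] ω - F ω| + |P[Y|m₂] ω - F ω|) ∂P :=
        integral_mono (integrable_condExp.sub integrable_condExp).abs ((hint _).add (hint _))
          fun ω => by simpa only [Real.dist_eq] using dist_triangle_right _ _ (F ω)
    _ = ∫ ω, |P[Y|m₁] ω - F ω| ∂P + ∫ ω, |P[Y|m₂] ω - F ω| ∂P := integral_add (hint _) (hint _)
    _ ≤ 2 * ∫ ω, |P[Y|M] ω - F ω| ∂P := by
      linarith [integral_abs_condExp_sub_le_of_le (Y := Y) (h₁₂.trans h₂M) hM hF hFm,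
        integral_abs_condExp_sub_le_of_le (Y := Y) h₂M hM hF (hFm.mono h₁₂)]

end CondExp

lemma integral_abs_condExp_comap_sub_condExp_comap_le {Ω 𝒳 𝒜 : Type*} [MeasurableSpace Ω]
    [MeasurableSpace 𝒳] [MeasurableSpace 𝒜] {P : Measure Ω} [IsFiniteMeasure P] {Y : Ω → ℝ}
    {X : Ω → 𝒳} {A : Ω → 𝒜} {f : 𝒳 → ℝ} (hX : Measurable X)
    (hA : Measurable A) (hf : Measurable f) (hF : Integrable (f ∘ X) P) :
    ∫ ω, |P[Y | MeasurableSpace.comap (f ∘ X) inferInstance] ω -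
        P[Y | MeasurableSpace.comap (f ∘ X) inferInstance ⊔
          MeasurableSpace.comap A inferInstance] ω| ∂P
      ≤ 2 * ∫ ω, |P[Y | MeasurableSpace.comap X inferInstance ⊔
          MeasurableSpace.comap A inferInstance] ω - f (X ω)| ∂P := by
  have hfX : MeasurableSpace.comap (f ∘ X) inferInstance ≤ MeasurableSpace.comap X inferInstance :=
    MeasurableSpace.comap_comp.symm.le.trans (MeasurableSpace.comap_mono hf.comap_le)
  exact integral_abs_condExp_sub_condExp_le le_sup_left (sup_le_sup_right hfX _)
    (sup_le hX.comap_le hA.comap_le) hF (Measurable.of_comap_le le_rfl).stronglyMeasurable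

lemma lintegral_comp_eq_sum_mul_measure_preimage {Ω 𝒜 : Type*} [MeasurableSpace Ω]
    [MeasurableSpace 𝒜] [Fintype 𝒜] [MeasurableSingletonClass 𝒜] (P : Measure Ω) {A : Ω → 𝒜}
    (hA : Measurable A) (C : 𝒜 → ℝ≥0∞) :
    ∫⁻ ω, C (A ω) ∂P = ∑ a, C a * P (A ⁻¹' {a}) := by
  rw [← lintegral_map (.of_discrete) hA, lintegral_fintype]
  simp_rw [Measure.map_apply hA (measurableSet_singleton _)]

theorem suf_gap_randomized_le_kl_bound_general
    {Ω 𝒳 𝒜 Θ : Type*} [MeasurableSpace Ω] [MeasurableSpace 𝒳] [MeasurableSpace 𝒜]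
    [MeasurableSpace Θ] [Fintype 𝒜] [MeasurableSingletonClass 𝒜]
    (P : Measure Ω) [IsProbabilityMeasure P]
    (X : Ω → 𝒳) (A : Ω → 𝒜) (Y : Ω → ℝ)
    (hX : Measurable X) (hA : Measurable A)
    (n : ℕ)
    (hunif : ∀ a : 𝒜, P (A ⁻¹' {a}) = 1 / n)
    (g : Θ → 𝒳 → ℝ) (hg : Measurable (Function.uncurry g))
    (hg01 : ∀ θ x, g θ x ∈ Set.Icc (0 : ℝ) 1)
    (Q : Measure Θ) [IsProbabilityMeasure Q]
    (Qstar : 𝒜 → Measure Θ) (hQstar : ∀ a, IsProbabilityMeasure (Qstar a))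
    (μa : 𝒜 → Measure Θ) (hμa : ∀ a, IsProbabilityMeasure (μa a))
    (f : 𝒳 → ℝ) (hfdef : ∀ x, f x = ∫ θ, g θ x ∂Q)
    (B : Ω → ℝ)
    (hB : B = P[Y | MeasurableSpace.comap X inferInstance ⊔ MeasurableSpace.comap A inferInstance])
    (hrep : ∀ a : 𝒜, ∀ᵐ ω ∂P, A ω = a → ∫ θ, g θ (X ω) ∂(μa a) = B ω) :
    ENNReal.ofReal (∫ ω, |(P[Y | MeasurableSpace.comap (f ∘ X) inferInstance]) ω -
        (P[Y | MeasurableSpace.comap (f ∘ X) inferInstance ⊔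
              MeasurableSpace.comap A inferInstance]) ω| ∂P)
      ≤ (ENNReal.ofReal (2 * Real.sqrt 2) / n) *
          ∑ a : 𝒜, ((klDiv (Qstar a) Q) ^ (1 / 2 : ℝ) + (klDiv (Qstar a) (μa a)) ^ (1 / 2 : ℝ)) := by
  have hf : Measurable f := by
    rw [funext hfdef]
    exact (hg.stronglyMeasurable.integral_prod_left' (μ := Q)).measurable
  have hF : Integrable (f ∘ X) P := .of_mem_Icc 0 1 (hf.comp hX).aemeasurable <|
    ae_of_all _ fun ω => by
      simpa only [Function.comp_apply, hfdef] using integral_mem_Icc_zero_one (hg01 · (X ω))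
  have hgap := integral_abs_condExp_comap_sub_condExp_comap_le (Y := Y) hX hA hf hF
  rw [← hB] at hgap
  set C : 𝒜 → ℝ≥0∞ := fun a =>
    ENNReal.ofReal √2 * (klDiv (Qstar a) Q ^ (1 / 2 : ℝ) + klDiv (Qstar a) (μa a) ^ (1 / 2 : ℝ))
  have hpt : ∀ᵐ ω ∂P, ‖B ω - f (X ω)‖ₑ ≤ C (A ω) := by
    filter_upwards [ae_all_iff.2 hrep] with ω hω
    have := hQstar (A ω)
    have := hμa (A ω)
    rw [← edist_eq_enorm_sub, ← hω _ rfl, hfdef]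
    exact edist_integral_integral_le_klDiv_add_klDiv
      (hg.comp (measurable_id.prodMk measurable_const)) (hg01 · _)
  have hBF : Integrable (fun ω => B ω - f (X ω)) P := (hB ▸ integrable_condExp).sub hF
  calc _ ≤ ENNReal.ofReal (2 * ∫ ω, ‖B ω - f (X ω)‖ ∂P) := ENNReal.ofReal_le_ofReal hgap
    _ = 2 * ∫⁻ ω, ‖B ω - f (X ω)‖ₑ ∂P := by
      rw [ENNReal.ofReal_mul zero_le_two, ofReal_integral_norm_eq_lintegral_enorm hBF,
        ENNReal.ofReal_ofNat]
    _ ≤ 2 * ∫⁻ ω, C (A ω) ∂P := by gcongr 2 * ?_; exact lintegral_mono_ae hpt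
    _ = _ := by
      rw [lintegral_comp_eq_sum_mul_measure_preimage P hA, ENNReal.ofReal_mul zero_le_two,
        ENNReal.ofReal_ofNat, Finset.mul_sum, Finset.mul_sum]
      refine Finset.sum_congr rfl fun a _ => ?_
      rw [hunif, one_div, div_eq_mul_inv]
      ring

/-- **Corollary 1.** The group sufficiency gap of the randomized predictor
`f(x) = ∫ g(θ,x) dQ(θ)` is bounded by
`(2√2/n) · Σ_a (√KL(Q*_a ‖ Q) + √KL(Q*_a ‖ μ_a))`, where `μ_a` represents the subgroup
conditional distribution on the event `{A = a}`. -/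
theorem suf_gap_randomized_le_kl_bound
    {Ω 𝒳 𝒜 Θ : Type*} [MeasurableSpace Ω] [MeasurableSpace 𝒳] [MeasurableSpace 𝒜]
    [MeasurableSpace Θ] [Fintype 𝒜] [MeasurableSingletonClass 𝒜]
    (P : Measure Ω) [IsProbabilityMeasure P]
    (X : Ω → 𝒳) (A : Ω → 𝒜) (Y : Ω → ℝ)
    (hX : Measurable X) (hA : Measurable A) (hY : Measurable Y)
    (hY01 : ∀ ω, Y ω = 0 ∨ Y ω = 1)
    (n : ℕ) (hn : 1 ≤ n) (hcard : Fintype.card 𝒜 = n)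
    (hunif : ∀ a : 𝒜, P (A ⁻¹' {a}) = 1 / n)
    (g : Θ → 𝒳 → ℝ) (hg : Measurable (Function.uncurry g))
    (hg01 : ∀ θ x, g θ x ∈ Set.Icc (0 : ℝ) 1)
    (Q : Measure Θ) [IsProbabilityMeasure Q]
    (Qstar : 𝒜 → Measure Θ) (hQstar : ∀ a, IsProbabilityMeasure (Qstar a))
    (μa : 𝒜 → Measure Θ) (hμa : ∀ a, IsProbabilityMeasure (μa a))
    (f : 𝒳 → ℝ) (hfdef : ∀ x, f x = ∫ θ, g θ x ∂Q)
    (B : Ω → ℝ)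
    (hB : B = P[Y | MeasurableSpace.comap X inferInstance ⊔ MeasurableSpace.comap A inferInstance])
    (hrep : ∀ a : 𝒜, ∀ᵐ ω ∂P, A ω = a → ∫ θ, g θ (X ω) ∂(μa a) = B ω) :
    ENNReal.ofReal (∫ ω, |(P[Y | MeasurableSpace.comap (f ∘ X) inferInstance]) ω -
        (P[Y | MeasurableSpace.comap (f ∘ X) inferInstance ⊔
              MeasurableSpace.comap A inferInstance]) ω| ∂P)
      ≤ (ENNReal.ofReal (2 * Real.sqrt 2) / n) *
          ∑ a : 𝒜, ((klDiv (Qstar a) Q) ^ (1 / 2 : ℝ) + (klDiv (Qstar a) (μa a)) ^ (1 / 2 : ℝ)) :=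
  suf_gap_randomized_le_kl_bound_general P X A Y hX hA n hunif g hg hg01 Q Qstar hQstar μa hμa f
    hfdef B hB hrep
end

section
/- Let 𝒜_0 be a measurable space (hypothesis space), l ∈ ℕ, and for each k ∈ {1,…,l} let A_k be a measurable space, μ_k a probability measure on A_k, and X_1,…,X_l jointly independent random elements with X_k distributed as μ_k. For each k let g_k : 𝒜_0 × A_k → ℝ be jointly measurable with values in [a_k, b_k] for real constants a_k ≤ b_k, and define ζ_k(f) := ∫_{A_k} g_k(f, x) dμ_k(x). Fix a probability measure π on 𝒜_0 and real numbers λ > 0 and δ ∈ (0,1). Then with probability at least 1 − δ over the draw of (X_1,…,X_l), simultaneously for every probability measure ρ on 𝒜_0: ∫_{𝒜_0} Σ_{k=1}^l ζ_k(f) dρ(f) − ∫_{𝒜_0} Σ_{k=1}^l g_k(f, X_k) dρ(f) ≤ (1/λ)·( KL(ρ ‖ π) + (λ²/8)·Σ_{k=1}^l (b_k − a_k)² + log(1/δ) ). (Lemma E.1, PAC-Bayes lemma.) -/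
open MeasureTheory ProbabilityTheory
open scoped ENNReal NNReal Classical

/-!
Fix a hypothesis `f`. The summands `ζ_k f - g_k (f, X_k)` are independent, centred and take values
in intervals of length `b_k - a_k`, so by Hoeffding's lemma the moment generating function of
`H f = λ Σ_k (ζ_k f - g_k (f, X_k))` is at most `C = exp (λ² Σ_k (b_k - a_k)² / 8)`. By Fubini the
random variable `ω ↦ ∫ exp (H f) dπ` has expectation at most `C`, so by Markov's inequality it is
below `C / δ` outside an event of probability at most `δ`. On that event the Donsker–Varadhan
inequality `∫ h dρ ≤ KL(ρ‖π) + log ∫ exp h dπ`, which is Gibbs' inequality for `ρ` against the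
tilted measure `π.tilted h`, bounds `λ (∫ Σ ζ dρ - ∫ Σ g dρ)` for every `ρ` at once.
-/

open Set

section Integrals

variable {Θ : Type*} [MeasurableSpace Θ] {μ : Measure Θ} {f : Θ → ℝ}

lemma integral_mem_Icc_of_forall_mem_Icc [IsProbabilityMeasure μ] {a b : ℝ} (hf : Measurable f)
    (hfab : ∀ θ, f θ ∈ Icc a b) : ∫ θ, f θ ∂μ ∈ Icc a b := by
  have hfi : Integrable f μ := .of_mem_Icc a b hf.aemeasurable (ae_of_all _ hfab)
  constructor
  · simpa using integral_mono (integrable_const a) hfi fun θ ↦ (hfab θ).1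
  · simpa using integral_mono hfi (integrable_const b) fun θ ↦ (hfab θ).2

lemma integrable_exp_of_abs_le [IsFiniteMeasure μ] {M : ℝ} (hf : Measurable f)
    (hfM : ∀ θ, |f θ| ≤ M) : Integrable (fun θ ↦ Real.exp (f θ)) μ :=
  .of_bound hf.exp.aestronglyMeasurable (Real.exp M) (ae_of_all _ fun θ ↦ by
    rw [Real.norm_eq_abs, abs_of_pos (Real.exp_pos _), Real.exp_le_exp]
    exact (abs_le.1 (hfM θ)).2)

lemma integral_sum_sub_sum {ι : Type*} [Fintype ι] {c d : ι → Θ → ℝ}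
    (hc : ∀ i, Integrable (c i) μ) (hd : ∀ i, Integrable (d i) μ) :
    ∫ θ, ∑ i, (c i θ - d i θ) ∂μ = ∫ θ, ∑ i, c i θ ∂μ - ∫ θ, ∑ i, d i θ ∂μ := by
  simp only [Finset.sum_sub_distrib]
  exact integral_sub (integrable_finsetSum _ fun i _ ↦ hc i) (integrable_finsetSum _ fun i _ ↦ hd i)

end Integrals

lemma abs_mul_sum_sub_le {ι : Type*} [Fintype ι] {x y a b : ι → ℝ} {c : ℝ} (hc : 0 ≤ c)
    (hx : ∀ i, x i ∈ Icc (a i) (b i)) (hy : ∀ i, y i ∈ Icc (a i) (b i)) :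
    |c * ∑ i, (x i - y i)| ≤ c * ∑ i, (b i - a i) := by
  rw [abs_mul, abs_of_nonneg hc]
  gcongr
  refine (Finset.abs_sum_le_sum_abs _ _).trans (Finset.sum_le_sum fun i _ ↦ ?_)
  exact abs_sub_le_of_le_of_le (hx i).1 (hx i).2 (hy i).1 (hy i).2

lemma integral_le_integral_llr_add_log_integral_exp {Θ : Type*} [MeasurableSpace Θ]
    {ρ π : Measure Θ} [IsProbabilityMeasure ρ] [IsProbabilityMeasure π] {h : Θ → ℝ}
    (hρπ : ρ ≪ π) (hllr : Integrable (llr ρ π) ρ) (hhρ : Integrable h ρ)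
    (hhπ : Integrable (fun θ ↦ Real.exp (h θ)) π) :
    ∫ θ, h θ ∂ρ ≤ ∫ θ, llr ρ π θ ∂ρ + Real.log (∫ θ, Real.exp (h θ) ∂π) := by
  have : IsProbabilityMeasure (π.tilted h) := isProbabilityMeasure_tilted hhπ
  have gibbs := InformationTheory.integral_llr_add_sub_measure_univ_nonneg
    (hρπ.trans (absolutelyContinuous_tilted hhπ)) (integrable_llr_tilted_right hρπ hhρ hllr hhπ)
  rw [integral_llr_tilted_right hρπ hhρ hhπ hllr] at gibbs
  simp only [probReal_univ] at gibbs
  linarith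

lemma one_sub_ofReal_le_measure_lt_div {Ω : Type*} [MeasurableSpace Ω] {P : Measure Ω}
    [IsProbabilityMeasure P] {F : Ω → ℝ} {C δ : ℝ} (hF₀ : 0 ≤ F) (hFm : Measurable F)
    (hF : Integrable F P) (hFC : ∫ ω, F ω ∂P ≤ C) (hC : 0 < C) (hδ : 0 < δ) :
    1 - ENNReal.ofReal δ ≤ P {ω | F ω < C / δ} := by
  have markov : C / δ * P.real {ω | C / δ ≤ F ω} ≤ C :=
    (mul_meas_ge_le_integral_of_nonneg (ae_of_all _ hF₀) hF _).trans hFC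
  have htail : P {ω | C / δ ≤ F ω} ≤ ENNReal.ofReal δ := by
    rw [ENNReal.le_ofReal_iff_toReal_le (measure_ne_top _ _) hδ.le]
    refine le_of_mul_le_mul_left ?_ (div_pos hC hδ)
    rwa [div_mul_cancel₀ C hδ.ne']
  have hset : {ω | F ω < C / δ} = {ω | C / δ ≤ F ω}ᶜ := by ext; simp
  rw [hset, prob_compl_eq_one_sub (measurableSet_le measurable_const hFm)]
  exact tsub_le_tsub_left htail 1

lemma mgf_sum_integral_sub_le {Ω ι : Type*} [MeasurableSpace Ω] [Fintype ι] {P : Measure Ω}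
    {A : ι → Type*} [∀ i, MeasurableSpace (A i)] {X : ∀ i, Ω → A i} {φ : ∀ i, A i → ℝ}
    {a b : ι → ℝ} (hX : ∀ i, Measurable (X i)) (hindep : iIndepFun X P)
    (hφ : ∀ i, Measurable (φ i)) (hφab : ∀ i x, φ i x ∈ Icc (a i) (b i)) (t : ℝ) :
    mgf (fun ω ↦ ∑ i, (P[fun ω' ↦ φ i (X i ω')] - φ i (X i ω))) P t
      ≤ Real.exp (t ^ 2 / 8 * ∑ i, (b i - a i) ^ 2) := by
  have := hindep.isProbabilityMeasure
  have hoeffding (i : ι) : HasSubgaussianMGF (fun ω ↦ P[fun ω' ↦ φ i (X i ω')] - φ i (X i ω))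
      ((‖b i - a i‖₊ / 2) ^ 2) P := by
    have := (hasSubgaussianMGF_of_mem_Icc ((hφ i).comp (hX i)).aemeasurable
      (ae_of_all P fun ω ↦ hφab i (X i ω))).neg
    exact this.congr (ae_of_all _ fun ω ↦ by simp)
  have hindep' : iIndepFun (fun i ω ↦ P[fun ω' ↦ φ i (X i ω')] - φ i (X i ω)) P := by
    have := hindep.comp (fun i x ↦ P[fun ω' ↦ φ i (X i ω')] - φ i x) fun i ↦ (hφ i).const_sub _
    exact this
  refine ((HasSubgaussianMGF.sum_of_iIndepFun hindep' (s := Finset.univ)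
    fun i _ ↦ hoeffding i).mgf_le t).trans_eq ?_
  congr 1
  push_cast
  rw [Finset.mul_sum, Finset.sum_mul, Finset.sum_div]
  refine Finset.sum_congr rfl fun i _ ↦ ?_
  rw [Real.norm_eq_abs, div_pow, sq_abs]
  ring

theorem exists_measurableSet_forall_integral_le_integral_llr_add {Ω Θ : Type*}
    [MeasurableSpace Ω] [MeasurableSpace Θ] {P : Measure Ω} [IsProbabilityMeasure P]
    {π : Measure Θ} [IsProbabilityMeasure π] {H : Ω → Θ → ℝ} {M C δ : ℝ}
    (hH : Measurable (Function.uncurry H)) (hHM : ∀ ω θ, |H ω θ| ≤ M)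
    (hHC : ∀ θ, ∫ ω, Real.exp (H ω θ) ∂P ≤ C) (hC : 0 < C) (hδ : 0 < δ) :
    ∃ E : Set Ω, MeasurableSet E ∧ 1 - ENNReal.ofReal δ ≤ P E ∧
      ∀ ω ∈ E, ∀ ρ : Measure Θ, IsProbabilityMeasure ρ → ρ ≪ π → Integrable (llr ρ π) ρ →
        ∫ θ, H ω θ ∂ρ ≤ ∫ θ, llr ρ π θ ∂ρ + (Real.log C + Real.log (1 / δ)) := by
  set F : Ω → ℝ := fun ω ↦ ∫ θ, Real.exp (H ω θ) ∂π
  have hHω (ω : Ω) : Measurable (H ω) := hH.comp measurable_prodMk_left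
  have hexp_prod : Integrable (Function.uncurry fun ω θ ↦ Real.exp (H ω θ)) (P.prod π) :=
    integrable_exp_of_abs_le hH fun q ↦ hHM q.1 q.2
  have hFm : Measurable F := hH.exp.stronglyMeasurable.integral_prod_right'.measurable
  have hFpos (ω : Ω) : 0 < F ω := integral_exp_pos (integrable_exp_of_abs_le (hHω ω) (hHM ω))
  have hFC : ∫ ω, F ω ∂P ≤ C := by
    rw [integral_integral_swap hexp_prod]
    exact (integral_mono hexp_prod.integral_prod_right (integrable_const C) hHC).trans_eq
      (by simp)
  refine ⟨{ω | F ω < C / δ}, measurableSet_lt hFm measurable_const,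
    one_sub_ofReal_le_measure_lt_div (fun ω ↦ (hFpos ω).le) hFm hexp_prod.integral_prod_left
      hFC hC hδ, fun ω hω ρ _ hρπ hllr ↦ ?_⟩
  have hlogF : Real.log (F ω) ≤ Real.log C + Real.log (1 / δ) := by
    rw [← Real.log_mul hC.ne' (by positivity), ← div_eq_mul_one_div]
    exact Real.log_le_log (hFpos ω) (le_of_lt hω)
  have := integral_le_integral_llr_add_log_integral_exp hρπ hllr
    (.of_bound (hHω ω).aestronglyMeasurable M (ae_of_all _ (hHM ω)))
    (integrable_exp_of_abs_le (hHω ω) (hHM ω))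
  linarith

lemma ofReal_le_inv_mul_klDiv_add {Θ : Type*} [MeasurableSpace Θ] {ρ π : Measure Θ}
    {D R lam : ℝ} (hlam : 0 < lam)
    (hD : ρ ≪ π → Integrable (llr ρ π) ρ → lam * D ≤ ∫ θ, llr ρ π θ ∂ρ + R) :
    ENNReal.ofReal D ≤ ENNReal.ofReal (1 / lam) * (klDiv ρ π + ENNReal.ofReal R) := by
  unfold klDiv
  split_ifs with hKL
  · obtain ⟨hρπ, hllr⟩ := hKL
    calc ENNReal.ofReal D ≤ ENNReal.ofReal (1 / lam * (∫ θ, llr ρ π θ ∂ρ + R)) := by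
          refine ENNReal.ofReal_le_ofReal ?_
          rw [one_div, le_inv_mul_iff₀ hlam]
          exact hD hρπ hllr
      _ ≤ _ := by
          rw [ENNReal.ofReal_mul (by positivity)]
          gcongr
          exact ENNReal.ofReal_add_le
  · rw [top_add, ENNReal.mul_top (by simpa using hlam)]
    exact le_top

theorem pac_bayes_lemma_general
    {Ω 𝒜₀ : Type*} [MeasurableSpace Ω] [MeasurableSpace 𝒜₀]
    (P : Measure Ω) [IsProbabilityMeasure P]
    (l : ℕ) (Atype : Fin l → Type*) [∀ k, MeasurableSpace (Atype k)]
    (μ : ∀ k, Measure (Atype k)) (hμ : ∀ k, IsProbabilityMeasure (μ k))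
    (Xs : ∀ k, Ω → Atype k) (hXs : ∀ k, Measurable (Xs k))
    (hindep : iIndepFun Xs P)
    (hdist : ∀ k, P.map (Xs k) = μ k)
    (g : ∀ k, 𝒜₀ → Atype k → ℝ) (hg : ∀ k, Measurable (Function.uncurry (g k)))
    (a b : Fin l → ℝ)
    (hrange : ∀ k fh x, g k fh x ∈ Set.Icc (a k) (b k))
    (π : Measure 𝒜₀) [IsProbabilityMeasure π]
    (lam δ : ℝ) (hlam : 0 < lam) (hδ : δ ∈ Set.Ioo (0 : ℝ) 1) :
    ∃ E : Set Ω, MeasurableSet E ∧ 1 - ENNReal.ofReal δ ≤ P E ∧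
      ∀ ω ∈ E, ∀ ρ : Measure 𝒜₀, IsProbabilityMeasure ρ →
        ENNReal.ofReal ((∫ fh, ∑ k : Fin l, (∫ x, g k fh x ∂(μ k)) ∂ρ) -
            ∫ fh, ∑ k : Fin l, g k fh (Xs k ω) ∂ρ)
          ≤ ENNReal.ofReal (1 / lam) *
              (klDiv ρ π +
                ENNReal.ofReal (lam ^ 2 / 8 * ∑ k : Fin l, (b k - a k) ^ 2 + Real.log (1 / δ))) := by
  set ζ : ∀ k, 𝒜₀ → ℝ := fun k f ↦ ∫ x, g k f x ∂(μ k)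
  have hgf (k : Fin l) (f : 𝒜₀) : Measurable (g k f) := (hg k).comp measurable_prodMk_left
  have hgω (k : Fin l) (ω : Ω) : Measurable fun f ↦ g k f (Xs k ω) :=
    (hg k).comp (measurable_id.prodMk measurable_const)
  have hζm (k : Fin l) : Measurable (ζ k) :=
    (hg k).stronglyMeasurable.integral_prod_right'.measurable
  have hζab (k : Fin l) (f : 𝒜₀) : ζ k f ∈ Icc (a k) (b k) :=
    integral_mem_Icc_of_forall_mem_Icc (hgf k f) (hrange k f)
  have hζ (k : Fin l) (f : 𝒜₀) : ζ k f = P[fun ω ↦ g k f (Xs k ω)] := by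
    simp only [ζ]
    rw [← hdist k, integral_map (hXs k).aemeasurable (hgf k f).aestronglyMeasurable]
  set H : Ω → 𝒜₀ → ℝ := fun ω f ↦ lam * ∑ k, (ζ k f - g k f (Xs k ω))
  have hHm : Measurable (Function.uncurry H) :=
    measurable_const.mul <| Finset.measurable_sum _ fun k _ ↦ ((hζm k).comp measurable_snd).sub
      ((hg k).comp (measurable_snd.prodMk ((hXs k).comp measurable_fst)))
  have hHM (ω : Ω) (f : 𝒜₀) : |H ω f| ≤ lam * ∑ k, (b k - a k) :=
    abs_mul_sum_sub_le hlam.le (hζab · f) (hrange · f _)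
  have hHC (f : 𝒜₀) : ∫ ω, Real.exp (H ω f) ∂P ≤ Real.exp (lam ^ 2 / 8 * ∑ k, (b k - a k) ^ 2) := by
    simp only [H, hζ]
    exact mgf_sum_integral_sub_le hXs hindep (hgf · f) (hrange · f) lam
  obtain ⟨E, hEm, hPE, hE⟩ :=
    exists_measurableSet_forall_integral_le_integral_llr_add (π := π) hHm hHM hHC
      (Real.exp_pos _) hδ.1
  refine ⟨E, hEm, hPE, fun ω hω ρ hρ ↦ ofReal_le_inv_mul_klDiv_add hlam fun hρπ hllr ↦ ?_⟩
  have hHρ : ∫ f, H ω f ∂ρ = lam * ((∫ f, ∑ k, ζ k f ∂ρ) - ∫ f, ∑ k, g k f (Xs k ω) ∂ρ) := by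
    rw [integral_const_mul, integral_sum_sub_sum
      (fun k ↦ .of_mem_Icc _ _ (hζm k).aemeasurable (ae_of_all _ (hζab k)))
      (fun k ↦ .of_mem_Icc _ _ (hgω k ω).aemeasurable (ae_of_all _ (hrange k · _)))]
  rw [← hHρ]
  simpa only [Real.log_exp] using hE ω hω ρ hρ hρπ hllr

/-- **Lemma E.1 (PAC-Bayes lemma).** With probability at least `1 − δ` over the draw of the
independent samples `(X_1, …, X_l)`, simultaneously for every probability measure `ρ`:
`E_{f∼ρ} Σ_k ζ_k(f) − E_{f∼ρ} Σ_k g_k(f, X_k)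
  ≤ (1/λ)·(KL(ρ‖π) + (λ²/8)·Σ_k (b_k − a_k)² + log(1/δ))`. -/
theorem pac_bayes_lemma
    {Ω 𝒜₀ : Type*} [MeasurableSpace Ω] [MeasurableSpace 𝒜₀]
    (P : Measure Ω) [IsProbabilityMeasure P]
    (l : ℕ) (Atype : Fin l → Type*) [∀ k, MeasurableSpace (Atype k)]
    (μ : ∀ k, Measure (Atype k)) (hμ : ∀ k, IsProbabilityMeasure (μ k))
    (Xs : ∀ k, Ω → Atype k) (hXs : ∀ k, Measurable (Xs k))
    (hindep : iIndepFun Xs P)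
    (hdist : ∀ k, P.map (Xs k) = μ k)
    (g : ∀ k, 𝒜₀ → Atype k → ℝ) (hg : ∀ k, Measurable (Function.uncurry (g k)))
    (a b : Fin l → ℝ) (hab : ∀ k, a k ≤ b k)
    (hrange : ∀ k fh x, g k fh x ∈ Set.Icc (a k) (b k))
    (π : Measure 𝒜₀) [IsProbabilityMeasure π]
    (lam δ : ℝ) (hlam : 0 < lam) (hδ : δ ∈ Set.Ioo (0 : ℝ) 1) :
    ∃ E : Set Ω, MeasurableSet E ∧ 1 - ENNReal.ofReal δ ≤ P E ∧
      ∀ ω ∈ E, ∀ ρ : Measure 𝒜₀, IsProbabilityMeasure ρ →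
        ENNReal.ofReal ((∫ fh, ∑ k : Fin l, (∫ x, g k fh x ∂(μ k)) ∂ρ) -
            ∫ fh, ∑ k : Fin l, g k fh (Xs k ω) ∂ρ)
          ≤ ENNReal.ofReal (1 / lam) *
              (klDiv ρ π +
                ENNReal.ofReal (lam ^ 2 / 8 * ∑ k : Fin l, (b k - a k) ^ 2 + Real.log (1 / δ))) :=
  pac_bayes_lemma_general P l Atype μ hμ Xs hXs hindep hdist g hg a b hrange π lam δ hlam hδ
end

section
/- For every measurable predictor f : 𝒳 → [0,1], E[ | E[Y | σ(f∘X, A)] − B | ] ≤ 2·E[ |f(X) − B| ], where B = E[Y | σ(X,A)] is the A-group Bayes predictor and σ(f∘X, A) is the σ-algebra generated jointly by f∘X and A. (Key inequality in the proof of Theorem 1, using that E[Y | σ(B,A)] = B almost surely.) -/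
open MeasureTheory

/-!
Conditioning on a coarser σ-algebra `m ≤ m'` is a `2`-quasi-optimal `L¹` approximation: for any
integrable `m`-measurable `g`, `E[Z | m] - E[Z | m'] = E[E[Z | m'] - g | m] + (g - E[Z | m'])` a.e.
by the tower property, and the conditional expectation is an `L¹` contraction. Since `f ∘ X` is
`σ(f ∘ X, A)`-measurable, taking `g = f ∘ X` gives the inequality.
-/

theorem MeasurableSpace.comap_comp_le_comap {α β γ : Type*} [mβ : MeasurableSpace β]
    [mγ : MeasurableSpace γ] {f : β → γ} (hf : Measurable f) (X : α → β) :
    mγ.comap (f ∘ X) ≤ mβ.comap X := by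
  rw [← MeasurableSpace.comap_comp]
  exact MeasurableSpace.comap_mono hf.comap_le

section CondExp

variable {α : Type*} {m m' m0 : MeasurableSpace α} {μ : Measure α}

theorem integral_abs_condExp_sub_le_two_mul (hm : m ≤ m0) [SigmaFinite (μ.trim hm)]
    {f g : α → ℝ} (hf : Integrable f μ) (hg : StronglyMeasurable[m] g) (hgi : Integrable g μ) :
    ∫ x, |μ[f | m] x - f x| ∂μ ≤ 2 * ∫ x, |g x - f x| ∂μ := by
  have hdecomp : ∀ᵐ x ∂μ, μ[f | m] x - f x = μ[f - g | m] x + (g x - f x) := by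
    filter_upwards [condExp_sub hf hgi m] with x hx
    rw [hx, Pi.sub_apply, condExp_of_stronglyMeasurable hm hg hgi]
    ring
  have hint₁ : Integrable (fun x => |μ[f - g | m] x|) μ := integrable_condExp.abs
  have hint₂ : Integrable (fun x => |g x - f x|) μ := (hgi.sub hf).abs
  calc ∫ x, |μ[f | m] x - f x| ∂μ
      ≤ ∫ x, (|μ[f - g | m] x| + |g x - f x|) ∂μ := by
        refine integral_mono_ae (integrable_condExp.sub hf).abs (hint₁.add hint₂) ?_
        filter_upwards [hdecomp] with x hx
        rw [hx]
        exact abs_add_le _ _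
    _ = ∫ x, |μ[f - g | m] x| ∂μ + ∫ x, |g x - f x| ∂μ := integral_add hint₁ hint₂
    _ ≤ ∫ x, |f x - g x| ∂μ + ∫ x, |g x - f x| ∂μ :=
        add_le_add_left (integral_abs_condExp_le (f - g)) _
    _ = 2 * ∫ x, |g x - f x| ∂μ := by
        simp_rw [abs_sub_comm (f _)]
        ring

theorem integral_abs_condExp_sub_condExp_le_two_mul (hmm' : m ≤ m') (hm' : m' ≤ m0)
    [SigmaFinite (μ.trim hm')] [SigmaFinite (μ.trim (hmm'.trans hm'))] (Z : α → ℝ)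
    {g : α → ℝ} (hg : StronglyMeasurable[m] g) (hgi : Integrable g μ) :
    ∫ x, |μ[Z | m] x - μ[Z | m'] x| ∂μ ≤ 2 * ∫ x, |g x - μ[Z | m'] x| ∂μ := by
  calc ∫ x, |μ[Z | m] x - μ[Z | m'] x| ∂μ
      = ∫ x, |μ[μ[Z | m'] | m] x - μ[Z | m'] x| ∂μ := by
        refine integral_congr_ae ?_
        filter_upwards [condExp_condExp_of_le hmm' hm' (f := Z) (μ := μ)] with x hx
        rw [hx]
    _ ≤ 2 * ∫ x, |g x - μ[Z | m'] x| ∂μ :=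
        integral_abs_condExp_sub_le_two_mul _ integrable_condExp hg hgi

end CondExp

theorem expected_dist_condExp_joint_to_bayes_le_general
    {Ω 𝒳 𝒜 : Type*} [MeasurableSpace Ω] [MeasurableSpace 𝒳] [MeasurableSpace 𝒜]
    (P : Measure Ω) [IsProbabilityMeasure P]
    (X : Ω → 𝒳) (A : Ω → 𝒜) (Y : Ω → ℝ)
    (hX : Measurable X) (hA : Measurable A)
    (f : 𝒳 → ℝ) (hf : Measurable f) (hf01 : ∀ x, f x ∈ Set.Icc (0 : ℝ) 1)
    (B : Ω → ℝ)
    (hB : B = P[Y | MeasurableSpace.comap X inferInstance ⊔ MeasurableSpace.comap A inferInstance]) :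
    ∫ ω, |(P[Y | MeasurableSpace.comap (f ∘ X) inferInstance ⊔
              MeasurableSpace.comap A inferInstance]) ω - B ω| ∂P
      ≤ 2 * ∫ ω, |f (X ω) - B ω| ∂P := by
  subst hB
  have hXA : MeasurableSpace.comap X inferInstance ⊔ MeasurableSpace.comap A inferInstance ≤ ‹_› :=
    sup_le hX.comap_le hA.comap_le
  have hfXA := sup_le_sup_right (MeasurableSpace.comap_comp_le_comap hf X)
    (MeasurableSpace.comap A inferInstance)
  have hfX_meas : StronglyMeasurable[MeasurableSpace.comap (f ∘ X) inferInstance ⊔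
      MeasurableSpace.comap A inferInstance] (f ∘ X) := by
    refine Measurable.stronglyMeasurable ?_
    exact (comap_measurable (f ∘ X)).mono le_sup_left le_rfl
  have hfX_int : Integrable (f ∘ X) P := by
    refine .of_bound (hf.comp hX).aestronglyMeasurable 1 (ae_of_all _ fun ω => ?_)
    obtain ⟨h0, h1⟩ := hf01 (X ω)
    rw [Real.norm_eq_abs, Function.comp_apply, abs_le]
    exact ⟨by linarith, h1⟩
  exact integral_abs_condExp_sub_condExp_le_two_mul hfXA hXA Y hfX_meas hfX_int

/-- **Key inequality in the proof of Theorem 1.** For every measurable predictor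
`f : 𝒳 → [0,1]`, `E[|E[Y | σ(f∘X, A)] − B|] ≤ 2·E[|f(X) − B|]`, where `B = E[Y | σ(X,A)]`. -/
theorem expected_dist_condExp_joint_to_bayes_le
    {Ω 𝒳 𝒜 : Type*} [MeasurableSpace Ω] [MeasurableSpace 𝒳] [MeasurableSpace 𝒜]
    (P : Measure Ω) [IsProbabilityMeasure P]
    (X : Ω → 𝒳) (A : Ω → 𝒜) (Y : Ω → ℝ)
    (hX : Measurable X) (hA : Measurable A) (hY : Measurable Y)
    (hY01 : ∀ ω, Y ω = 0 ∨ Y ω = 1)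
    (f : 𝒳 → ℝ) (hf : Measurable f) (hf01 : ∀ x, f x ∈ Set.Icc (0 : ℝ) 1)
    (B : Ω → ℝ)
    (hB : B = P[Y | MeasurableSpace.comap X inferInstance ⊔ MeasurableSpace.comap A inferInstance]) :
    ∫ ω, |(P[Y | MeasurableSpace.comap (f ∘ X) inferInstance ⊔
              MeasurableSpace.comap A inferInstance]) ω - B ω| ∂P
      ≤ 2 * ∫ ω, |f (X ω) - B ω| ∂P :=
  expected_dist_condExp_joint_to_bayes_le_general P X A Y hX hA f hf hf01 B hB
end

section
/- For every measurable predictor f : 𝒳 → [0,1], E[ | E[Y | σ(f∘X)] − B | ] ≤ 2·E[ |f(X) − B| ], where B = E[Y | σ(X,A)] is the A-group Bayes predictor and σ(f∘X) is the σ-algebra generated by f∘X. (Marginal key inequality in the proof of Theorem 1, using that E[Y | σ(B)] = B almost surely.) -/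
/-!
Conditioning `Y` on the coarser σ-algebra `σ(f ∘ X) ≤ σ(X, A)` is the same as conditioning `B`
on it (tower property). Conditional expectation is an `L¹` contraction fixing `σ(f ∘ X)`-measurable
functions, so `E[B | σ(f ∘ X)]` is at most as far from `f ∘ X` as `B` is; the triangle inequality
through `f ∘ X` gives the factor `2`.
-/

open MeasureTheory

namespace MeasureTheory

variable {Ω : Type*} {m m₀ : MeasurableSpace Ω} {μ : Measure Ω} {f g : Ω → ℝ}

theorem integral_abs_condExp_sub_le_s12 (hm : m ≤ m₀) [SigmaFinite (μ.trim hm)]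
    (hf : Integrable f μ) (hg : Integrable g μ) (hgm : StronglyMeasurable[m] g) :
    ∫ ω, |μ[f|m] ω - g ω| ∂μ ≤ ∫ ω, |f ω - g ω| ∂μ := by
  have hsub : μ[f - g|m] =ᵐ[μ] μ[f|m] - g := by
    simpa only [condExp_of_stronglyMeasurable hm hgm hg] using condExp_sub hf hg m
  calc ∫ ω, |μ[f|m] ω - g ω| ∂μ = ∫ ω, |μ[f - g|m] ω| ∂μ :=
        integral_congr_ae (hsub.mono fun ω h => by simp only [h, Pi.sub_apply])
    _ ≤ ∫ ω, |f ω - g ω| ∂μ := integral_abs_condExp_le (f - g)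

theorem integral_abs_condExp_sub_self_le_two_mul (hm : m ≤ m₀) [SigmaFinite (μ.trim hm)]
    (hf : Integrable f μ) (hg : Integrable g μ) (hgm : StronglyMeasurable[m] g) :
    ∫ ω, |μ[f|m] ω - f ω| ∂μ ≤ 2 * ∫ ω, |g ω - f ω| ∂μ := by
  have hcond_g : Integrable (fun ω => |μ[f|m] ω - g ω|) μ := (integrable_condExp.sub hg).abs
  have hg_f : Integrable (fun ω => |g ω - f ω|) μ := (hg.sub hf).abs
  calc ∫ ω, |μ[f|m] ω - f ω| ∂μ ≤ ∫ ω, (|μ[f|m] ω - g ω| + |g ω - f ω|) ∂μ :=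
        integral_mono (integrable_condExp.sub hf).abs (hcond_g.add hg_f)
          fun ω => abs_sub_le _ _ _
    _ = ∫ ω, |μ[f|m] ω - g ω| ∂μ + ∫ ω, |g ω - f ω| ∂μ := integral_add hcond_g hg_f
    _ ≤ ∫ ω, |f ω - g ω| ∂μ + ∫ ω, |g ω - f ω| ∂μ :=
        add_le_add (integral_abs_condExp_sub_le_s12 hm hf hg hgm) le_rfl
    _ = 2 * ∫ ω, |g ω - f ω| ∂μ := by simp only [abs_sub_comm (f _)]; ring

end MeasureTheory

theorem expected_dist_condExp_marginal_to_bayes_le_general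
    {Ω 𝒳 𝒜 : Type*} [MeasurableSpace Ω] [MeasurableSpace 𝒳] [MeasurableSpace 𝒜]
    (P : Measure Ω) [IsProbabilityMeasure P]
    (X : Ω → 𝒳) (A : Ω → 𝒜) (Y : Ω → ℝ)
    (hX : Measurable X) (hA : Measurable A)
    (f : 𝒳 → ℝ) (hf : Measurable f) (hf01 : ∀ x, f x ∈ Set.Icc (0 : ℝ) 1)
    (B : Ω → ℝ)
    (hB : B = P[Y | MeasurableSpace.comap X inferInstance ⊔ MeasurableSpace.comap A inferInstance]) :
    ∫ ω, |(P[Y | MeasurableSpace.comap (f ∘ X) inferInstance]) ω - B ω| ∂P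
      ≤ 2 * ∫ ω, |f (X ω) - B ω| ∂P := by
  have hXA_le : MeasurableSpace.comap X inferInstance ⊔ MeasurableSpace.comap A inferInstance
      ≤ ‹MeasurableSpace Ω› := sup_le hX.comap_le hA.comap_le
  have hfX_le_XA : MeasurableSpace.comap (f ∘ X) inferInstance
      ≤ MeasurableSpace.comap X inferInstance ⊔ MeasurableSpace.comap A inferInstance := by
    rw [← MeasurableSpace.comap_comp]
    exact le_sup_of_le_left (MeasurableSpace.comap_mono hf.comap_le)
  have hfX_int : Integrable (f ∘ X) P :=
    Integrable.of_bound (hf.comp hX).aestronglyMeasurable 1 <| .of_forall fun ω => by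
      obtain ⟨h0, h1⟩ := hf01 (X ω)
      rwa [Function.comp_apply, Real.norm_eq_abs, abs_of_nonneg h0]
  have htower := condExp_condExp_of_le (μ := P) (f := Y) hfX_le_XA hXA_le
  rw [← hB] at htower
  calc ∫ ω, |(P[Y | MeasurableSpace.comap (f ∘ X) inferInstance]) ω - B ω| ∂P
      = ∫ ω, |(P[B | MeasurableSpace.comap (f ∘ X) inferInstance]) ω - B ω| ∂P :=
        integral_congr_ae (htower.mono fun ω h => by simp only [h])
    _ ≤ 2 * ∫ ω, |f (X ω) - B ω| ∂P :=
        integral_abs_condExp_sub_self_le_two_mul (hf.comp hX).comap_le (hB ▸ integrable_condExp)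
          hfX_int (comap_measurable (f ∘ X)).stronglyMeasurable

/-- **Marginal key inequality in the proof of Theorem 1.** For every measurable predictor
`f : 𝒳 → [0,1]`, `E[|E[Y | σ(f∘X)] − B|] ≤ 2·E[|f(X) − B|]`, where `B = E[Y | σ(X,A)]`. -/
theorem expected_dist_condExp_marginal_to_bayes_le
    {Ω 𝒳 𝒜 : Type*} [MeasurableSpace Ω] [MeasurableSpace 𝒳] [MeasurableSpace 𝒜]
    (P : Measure Ω) [IsProbabilityMeasure P]
    (X : Ω → 𝒳) (A : Ω → 𝒜) (Y : Ω → ℝ)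
    (hX : Measurable X) (hA : Measurable A) (hY : Measurable Y)
    (hY01 : ∀ ω, Y ω = 0 ∨ Y ω = 1)
    (f : 𝒳 → ℝ) (hf : Measurable f) (hf01 : ∀ x, f x ∈ Set.Icc (0 : ℝ) 1)
    (B : Ω → ℝ)
    (hB : B = P[Y | MeasurableSpace.comap X inferInstance ⊔ MeasurableSpace.comap A inferInstance]) :
    ∫ ω, |(P[Y | MeasurableSpace.comap (f ∘ X) inferInstance]) ω - B ω| ∂P
      ≤ 2 * ∫ ω, |f (X ω) - B ω| ∂P :=
  expected_dist_condExp_marginal_to_bayes_le_general P X A Y hX hA f hf hf01 B hB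
end

section
/- Suppose U : Ω → [0,1] is a measurable random variable that is independent (as a random element) of the triple (X, Y, A). Then: (i) demographic parity holds, i.e. E[U | σ(A)] = E[U] P-almost surely; (ii) equalized odds holds, i.e. E[U | σ(Y, A)] = E[U | σ(Y)] P-almost surely; (iii) E[Y | σ(U)] = E[Y] and E[Y | σ(U, A)] = E[Y | σ(A)] P-almost surely, so the group sufficiency gap of the constant-in-X randomized predictor U equals E[ | E[Y] − E[Y | σ(A)] | ]; and (iv) if moreover Y and A are not independent, then this group sufficiency gap is strictly positive. (Counterexample of Appendix A: a purely random predictor satisfies DP and EO but violates group sufficiency when A is not independent of Y.) -/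
/-!
Independence of `U` from `(X, Y, A)` makes every conditional expectation of `U` given `Y` and `A`
its mean, and `E[Y | σ(U)] = E[Y]`. The substantive step is that adjoining a σ-algebra
independent of `σ(Y, A)` does not change `E[Y | σ(A)]`, i.e. `E[Y | σ(U) ⊔ σ(A)] = E[Y | σ(A)]`;
this is checked on the π-system of rectangles `s ∩ t` with `s ∈ σ(U)`, `t ∈ σ(A)`. So the gap equals
`E|E[Y] - E[Y | σ(A)]|`; if it vanished, `E[𝟙{Y = 1} | σ(A)]` would be constant, which makes the
event `{Y = 1}`, and with it the binary `Y`, independent of `A`.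
-/

open MeasureTheory ProbabilityTheory

section

variable {Ω E : Type*} [NormedAddCommGroup E] [NormedSpace ℝ E]
  {m₀ : MeasurableSpace Ω} {μ : Measure Ω}

theorem setIntegral_eq_setIntegral_of_isPiSystem {m : MeasurableSpace Ω} {s : Set (Set Ω)}
    {f g : Ω → E} (hm : m ≤ m₀) (h_eq : m = MeasurableSpace.generateFrom s)
    (h_inter : IsPiSystem s) (hf : Integrable f μ) (hg : Integrable g μ)
    (basic : ∀ t ∈ s, ∫ x in t, f x ∂μ = ∫ x in t, g x ∂μ)
    (h_univ : ∫ x, f x ∂μ = ∫ x, g x ∂μ) {t : Set Ω} (ht : MeasurableSet[m] t) :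
    ∫ x in t, f x ∂μ = ∫ x in t, g x ∂μ := by
  induction t, ht using MeasurableSpace.induction_on_inter h_eq h_inter with
  | empty => simp
  | basic t ht => exact basic t ht
  | compl t ht h =>
    rw [setIntegral_compl (hm _ ht) hf, setIntegral_compl (hm _ ht) hg, h, h_univ]
  | iUnion t hdisj ht h =>
    rw [integral_iUnion (fun i => hm _ (ht i)) hdisj hf.integrableOn,
      integral_iUnion (fun i => hm _ (ht i)) hdisj hg.integrableOn]
    exact tsum_congr h

theorem MeasurableSpace.sup_eq_generateFrom_image2_inter (m₁ m₂ : MeasurableSpace Ω) :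
    m₁ ⊔ m₂ = MeasurableSpace.generateFrom
      (Set.image2 (· ∩ ·) {s | MeasurableSet[m₁] s} {t | MeasurableSet[m₂] t}) := by
  refine le_antisymm (sup_le (fun s hs => ?_) (fun t ht => ?_)) ?_
  · exact measurableSet_generateFrom ⟨s, hs, Set.univ, .univ, Set.inter_univ s⟩
  · exact measurableSet_generateFrom ⟨Set.univ, .univ, t, ht, Set.univ_inter t⟩
  · refine generateFrom_le ?_
    rintro _ ⟨s, hs, t, ht, rfl⟩
    exact (le_sup_left (b := m₂) _ hs).inter (le_sup_right (a := m₁) _ ht)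

theorem isPiSystem_image2_inter (m₁ m₂ : MeasurableSpace Ω) :
    IsPiSystem (Set.image2 (· ∩ ·) {s | MeasurableSet[m₁] s} {t | MeasurableSet[m₂] t}) := by
  rintro _ ⟨s, hs, t, ht, rfl⟩ _ ⟨s', hs', t', ht', rfl⟩ _
  exact ⟨s ∩ s', hs.inter hs', t ∩ t', ht.inter ht', Set.inter_inter_inter_comm s s' t t'⟩

theorem setIntegral_inter_eq_measureReal_smul_of_indep [CompleteSpace E] [IsFiniteMeasure μ]
    {m₁ m' : MeasurableSpace Ω} (hm₁ : m₁ ≤ m₀) (hm' : m' ≤ m₀) (hindep : Indep m₁ m' μ)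
    {s t : Set Ω} (hs : MeasurableSet[m₁] s) (ht : MeasurableSet[m'] t) {f : Ω → E}
    (hf : StronglyMeasurable[m'] f) (hfi : Integrable f μ) :
    ∫ x in s ∩ t, f x ∂μ = μ.real s • ∫ x in t, f x ∂μ := by
  calc ∫ x in s ∩ t, f x ∂μ
      = ∫ x in s, t.indicator f x ∂μ := (setIntegral_indicator (hm' _ ht)).symm
    _ = ∫ x in s, μ[t.indicator f | m₁] x ∂μ :=
      (setIntegral_condExp hm₁ (hfi.indicator (hm' _ ht)) hs).symm
    _ = ∫ x in s, (∫ y, t.indicator f y ∂μ) ∂μ :=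
      setIntegral_congr_ae (hm₁ _ hs)
        ((condExp_indep_eq hm' hm₁ (hf.indicator ht) hindep.symm).mono fun x hx _ => hx)
    _ = μ.real s • ∫ x in t, f x ∂μ := by
      rw [setIntegral_const, integral_indicator (hm' _ ht)]

theorem condExp_sup_ae_eq_condExp_of_indep [CompleteSpace E] [IsFiniteMeasure μ]
    {m₁ m₂ m' : MeasurableSpace Ω} (hm₁ : m₁ ≤ m₀) (hm₂ : m₂ ≤ m') (hm' : m' ≤ m₀)
    (hindep : Indep m₁ m' μ) {f : Ω → E} (hf : StronglyMeasurable[m'] f)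
    (hfi : Integrable f μ) :
    μ[f | m₁ ⊔ m₂] =ᵐ[μ] μ[f | m₂] := by
  have hg : StronglyMeasurable[m'] (μ[f | m₂]) := stronglyMeasurable_condExp.mono hm₂
  refine (ae_eq_condExp_of_forall_setIntegral_eq (sup_le hm₁ (hm₂.trans hm')) hfi
    (fun _ _ _ => integrable_condExp.integrableOn) (fun s hs _ => ?_)
    (stronglyMeasurable_condExp.mono (le_sup_right : m₂ ≤ m₁ ⊔ m₂)).aestronglyMeasurable).symm
  refine setIntegral_eq_setIntegral_of_isPiSystem (sup_le hm₁ (hm₂.trans hm'))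
    (MeasurableSpace.sup_eq_generateFrom_image2_inter m₁ m₂) (isPiSystem_image2_inter m₁ m₂)
    integrable_condExp hfi ?_ (integral_condExp (hm₂.trans hm')) hs
  rintro _ ⟨s, hs, t, ht, rfl⟩
  rw [setIntegral_inter_eq_measureReal_smul_of_indep hm₁ hm' hindep hs (hm₂ _ ht) hg
      integrable_condExp,
    setIntegral_inter_eq_measureReal_smul_of_indep hm₁ hm' hindep hs (hm₂ _ ht) hf hfi,
    setIntegral_condExp (hm₂.trans hm') hfi ht]

theorem indep_generateFrom_singleton_of_condExp_indicator_ae_eq [IsZeroOrProbabilityMeasure μ]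
    {m : MeasurableSpace Ω} (hm : m ≤ m₀) {s : Set Ω} (hs : MeasurableSet[m₀] s)
    (h : μ[s.indicator (1 : Ω → ℝ) | m] =ᵐ[μ] fun _ => ∫ x, s.indicator (1 : Ω → ℝ) x ∂μ) :
    Indep (MeasurableSpace.generateFrom {s}) m μ := by
  refine IndepSets.indep (MeasurableSpace.generateFrom_singleton_le hs) hm
    (.singleton s) (@MeasurableSpace.isPiSystem_measurableSet Ω m) rfl
    (@MeasurableSpace.generateFrom_measurableSet Ω m).symm ?_
  rw [IndepSets_iff]
  rintro s' t hs' (ht : MeasurableSet[m] t)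
  rw [integral_indicator_one hs] at h
  rw [Set.mem_singleton_iff.1 hs',
    ← ENNReal.toReal_eq_toReal_iff' (by finiteness) (by finiteness), ENNReal.toReal_mul]
  change μ.real (s ∩ t) = μ.real s * μ.real t
  calc μ.real (s ∩ t)
      = ∫ x in t, s.indicator (1 : Ω → ℝ) x ∂μ := by
        simp [setIntegral_indicator hs, Set.inter_comm]
    _ = ∫ x in t, μ[s.indicator (1 : Ω → ℝ) | m] x ∂μ :=
      (setIntegral_condExp hm ((integrable_const 1).indicator hs) ht).symm
    _ = ∫ x in t, μ.real s ∂μ := setIntegral_congr_ae (hm _ ht) (h.mono fun x hx _ => hx)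
    _ = μ.real s * μ.real t := by rw [setIntegral_const, smul_eq_mul, mul_comm]

theorem indep_comap_of_condExp_ae_eq_integral [IsZeroOrProbabilityMeasure μ]
    {m : MeasurableSpace Ω} (hm : m ≤ m₀) {Y : Ω → ℝ} (hY : Measurable[m₀] Y)
    (hY01 : ∀ ω, Y ω = 0 ∨ Y ω = 1) (h : μ[Y | m] =ᵐ[μ] fun _ => ∫ x, Y x ∂μ) :
    Indep (MeasurableSpace.comap Y inferInstance) m μ := by
  obtain ⟨s, hs, rfl⟩ : ∃ s, MeasurableSet[m₀] s ∧ Y = s.indicator 1 :=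
    ⟨Y ⁻¹' {1}, hY (measurableSet_singleton 1), by
      funext ω; rcases hY01 ω with hω | hω <;> simp [hω]⟩
  refine indep_of_indep_of_le_left
    (indep_generateFrom_singleton_of_condExp_indicator_ae_eq hm hs h) (Measurable.comap_le ?_)
  exact measurable_const.indicator (MeasurableSpace.measurableSet_generateFrom rfl)

theorem ae_eq_of_integral_abs_sub_eq_zero {f g : Ω → ℝ} (hf : Integrable f μ)
    (hg : Integrable g μ) (h : ∫ x, |f x - g x| ∂μ = 0) : f =ᵐ[μ] g := by
  filter_upwards [(integral_eq_zero_iff_of_nonneg (fun x => abs_nonneg _) (hf.sub hg).abs).1 h]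
    with x hx
  exact sub_eq_zero.1 (abs_eq_zero.1 hx)

theorem integral_abs_integral_sub_condExp_pos_of_not_indep [IsZeroOrProbabilityMeasure μ]
    {m : MeasurableSpace Ω} (hm : m ≤ m₀) {Y : Ω → ℝ} (hY : Measurable[m₀] Y)
    (hY01 : ∀ ω, Y ω = 0 ∨ Y ω = 1) (hdep : ¬ Indep (MeasurableSpace.comap Y inferInstance) m μ) :
    0 < ∫ x, |(∫ y, Y y ∂μ) - (μ[Y | m]) x| ∂μ :=
  (integral_nonneg fun _ => abs_nonneg _).lt_of_ne' fun hzero =>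
    hdep <| indep_comap_of_condExp_ae_eq_integral hm hY hY01
      (ae_eq_of_integral_abs_sub_eq_zero (integrable_const _) integrable_condExp hzero).symm

end

theorem random_predictor_satisfies_dp_eo_but_not_sufficiency_general
    {Ω 𝒳 𝒜 : Type*} [MeasurableSpace Ω] [MeasurableSpace 𝒳] [MeasurableSpace 𝒜]
    (P : Measure Ω) [IsProbabilityMeasure P]
    (X : Ω → 𝒳) (A : Ω → 𝒜) (Y : Ω → ℝ)
    (hA : Measurable A) (hY : Measurable Y)
    (hY01 : ∀ ω, Y ω = 0 ∨ Y ω = 1)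
    (U : Ω → ℝ) (hU : Measurable U)
    (hindep : IndepFun U (fun ω => (X ω, Y ω, A ω)) P) :
    (P[U | MeasurableSpace.comap A inferInstance] =ᵐ[P] fun _ => ∫ ω, U ω ∂P)
    ∧ (P[U | MeasurableSpace.comap Y inferInstance ⊔ MeasurableSpace.comap A inferInstance]
        =ᵐ[P] P[U | MeasurableSpace.comap Y inferInstance])
    ∧ (P[Y | MeasurableSpace.comap U inferInstance] =ᵐ[P] fun _ => ∫ ω, Y ω ∂P)
    ∧ (P[Y | MeasurableSpace.comap U inferInstance ⊔ MeasurableSpace.comap A inferInstance]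
        =ᵐ[P] P[Y | MeasurableSpace.comap A inferInstance])
    ∧ (∫ ω, |(P[Y | MeasurableSpace.comap U inferInstance]) ω -
          (P[Y | MeasurableSpace.comap U inferInstance ⊔
                MeasurableSpace.comap A inferInstance]) ω| ∂P
        = ∫ ω, |(∫ ω', Y ω' ∂P) - (P[Y | MeasurableSpace.comap A inferInstance]) ω| ∂P)
    ∧ (¬ IndepFun Y A P →
        0 < ∫ ω, |(P[Y | MeasurableSpace.comap U inferInstance]) ω -
              (P[Y | MeasurableSpace.comap U inferInstance ⊔
                    MeasurableSpace.comap A inferInstance]) ω| ∂P) := by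
  set σU := MeasurableSpace.comap U inferInstance
  set σY := MeasurableSpace.comap Y inferInstance
  set σA := MeasurableSpace.comap A inferInstance
  have hUYA : Indep σU (σY ⊔ σA) P := by
    refine indep_of_indep_of_le_right ((IndepFun_iff_Indep _ _ _).1 hindep) (sup_le ?_ ?_)
    · exact Measurable.comap_le ((measurable_fst.comp measurable_snd).comp (comap_measurable _))
    · exact Measurable.comap_le ((measurable_snd.comp measurable_snd).comp (comap_measurable _))
  have hUm : StronglyMeasurable[σU] U := (comap_measurable U).stronglyMeasurable
  have hYm : StronglyMeasurable[σY ⊔ σA] Y :=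
    ((comap_measurable Y).mono le_sup_left le_rfl).stronglyMeasurable
  have hYint : Integrable Y P :=
    (integrable_const 1).mono' hY.aestronglyMeasurable
      (ae_of_all _ fun ω => by rcases hY01 ω with hω | hω <;> simp [hω])
  have hY_U : P[Y | σU] =ᵐ[P] fun _ => ∫ ω, Y ω ∂P :=
    condExp_indep_eq hY.comap_le hU.comap_le ((comap_measurable Y).stronglyMeasurable)
      (indep_of_indep_of_le_left hUYA.symm le_sup_left)
  have hY_UA : P[Y | σU ⊔ σA] =ᵐ[P] P[Y | σA] :=
    condExp_sup_ae_eq_condExp_of_indep hU.comap_le le_sup_right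
      (sup_le hY.comap_le hA.comap_le) hUYA hYm hYint
  have hgap : ∫ ω, |P[Y | σU] ω - P[Y | σU ⊔ σA] ω| ∂P
      = ∫ ω, |(∫ ω', Y ω' ∂P) - P[Y | σA] ω| ∂P :=
    integral_congr_ae (by filter_upwards [hY_U, hY_UA] with ω h₁ h₂; rw [h₁, h₂])
  refine ⟨condExp_indep_eq hU.comap_le hA.comap_le hUm
      (indep_of_indep_of_le_right hUYA le_sup_right),
    (condExp_indep_eq hU.comap_le (sup_le hY.comap_le hA.comap_le) hUm hUYA).trans
      (condExp_indep_eq hU.comap_le hY.comap_le hUm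
        (indep_of_indep_of_le_right hUYA le_sup_left)).symm,
    hY_U, hY_UA, hgap, fun hdep => ?_⟩
  rw [hgap]
  exact integral_abs_integral_sub_condExp_pos_of_not_indep hA.comap_le hY hY01
    ((IndepFun_iff_Indep _ _ _).not.1 hdep)

/-- **Counterexample of Appendix A.** If the score `U : Ω → [0,1]` is independent of the triple
`(X, Y, A)`, then (i) demographic parity holds; (ii) equalized odds holds; (iii)
`E[Y|σ(U)] = E[Y]` and `E[Y|σ(U,A)] = E[Y|σ(A)]` a.s., so the group sufficiency gap of `U`
equals `E[|E[Y] − E[Y|σ(A)]|]`; and (iv) if `Y` and `A` are not independent, this group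
sufficiency gap is strictly positive. -/
theorem random_predictor_satisfies_dp_eo_but_not_sufficiency
    {Ω 𝒳 𝒜 : Type*} [MeasurableSpace Ω] [MeasurableSpace 𝒳] [MeasurableSpace 𝒜]
    (P : Measure Ω) [IsProbabilityMeasure P]
    (X : Ω → 𝒳) (A : Ω → 𝒜) (Y : Ω → ℝ)
    (hX : Measurable X) (hA : Measurable A) (hY : Measurable Y)
    (hY01 : ∀ ω, Y ω = 0 ∨ Y ω = 1)
    (U : Ω → ℝ) (hU : Measurable U) (hU01 : ∀ ω, U ω ∈ Set.Icc (0 : ℝ) 1)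
    (hindep : IndepFun U (fun ω => (X ω, Y ω, A ω)) P) :
    (P[U | MeasurableSpace.comap A inferInstance] =ᵐ[P] fun _ => ∫ ω, U ω ∂P)
    ∧ (P[U | MeasurableSpace.comap Y inferInstance ⊔ MeasurableSpace.comap A inferInstance]
        =ᵐ[P] P[U | MeasurableSpace.comap Y inferInstance])
    ∧ (P[Y | MeasurableSpace.comap U inferInstance] =ᵐ[P] fun _ => ∫ ω, Y ω ∂P)
    ∧ (P[Y | MeasurableSpace.comap U inferInstance ⊔ MeasurableSpace.comap A inferInstance]
        =ᵐ[P] P[Y | MeasurableSpace.comap A inferInstance])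
    ∧ (∫ ω, |(P[Y | MeasurableSpace.comap U inferInstance]) ω -
          (P[Y | MeasurableSpace.comap U inferInstance ⊔
                MeasurableSpace.comap A inferInstance]) ω| ∂P
        = ∫ ω, |(∫ ω', Y ω' ∂P) - (P[Y | MeasurableSpace.comap A inferInstance]) ω| ∂P)
    ∧ (¬ IndepFun Y A P →
        0 < ∫ ω, |(P[Y | MeasurableSpace.comap U inferInstance]) ω -
              (P[Y | MeasurableSpace.comap U inferInstance ⊔
                    MeasurableSpace.comap A inferInstance]) ω| ∂P) :=
  random_predictor_satisfies_dp_eo_but_not_sufficiency_general P X A Y hA hY hY01 U hU hindep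
end
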